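/- arXiv:2504.09580 — 8 statements merged into one kernel-verified Lean document; each statement's English description precedes it below -/
import Mathlib

section
/- Let C ⊆ F_q^n be a linear code of dimension k and minimum distance d with (r,δ)-locality, where δ ≥ 2. Then d ≤ n - k + 1 - (⌈k/r⌉ - 1)(δ - 1). -/
/-!
Let `κ(S)` be the dimension of the subcode of `C` vanishing on `S`. While that subcode is nonzero,
some local group `J` meets the support of one of its words; since `C|_J` has distance at least `δ`,
a Singleton argument on `J \ S` gives `κ(S) - κ(S ∪ J) ≤ |J \ S| - (δ - 1) ≤ r`. Adjoining
`t = ⌈k/r⌉ - 1` local groups to `S = ∅` thus keeps `κ(S) ≥ k - t r > 0` while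
`|S| + κ(S) ≥ k + t (δ - 1)`. The Singleton bound for the subcode vanishing on `S`, punctured to
the complement of `S`, gives `d ≤ n - |S| - κ(S) + 1`, and the claim follows.
-/

/-- `C` has minimum Hamming distance `d`. -/
def IsMinDist {ι F : Type*} [Fintype ι] [Field F] [DecidableEq F]
    (C : Submodule F (ι → F)) (d : ℕ) : Prop :=
  (∀ c ∈ C, c ≠ 0 → d ≤ hammingNorm c) ∧ ∃ c ∈ C, c ≠ 0 ∧ hammingNorm c = d

/-- `C` has `(r,δ)`-locality: every coordinate `i` lies in a recovery set `J` of size at most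
`r + δ - 1` such that the punctured code `C|_J` has minimum distance at least `δ`. -/
def HasLocality {ι F : Type*} [Fintype ι] [Field F] [DecidableEq F]
    (C : Submodule F (ι → F)) (r δ : ℕ) : Prop :=
  ∀ i : ι, ∃ J : Finset ι, i ∈ J ∧ J.card ≤ r + δ - 1 ∧
    ∀ c ∈ C, (∃ j ∈ J, c j ≠ 0) → δ ≤ (J.filter fun j => c j ≠ 0).card

open Finset Module

section

variable {ι F : Type*} [Field F]

def vanishingOn (S : Set ι) : Submodule F (ι → F) :=
  Submodule.pi S fun _ => ⊥

@[simp]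
theorem mem_vanishingOn {S : Set ι} {c : ι → F} : c ∈ vanishingOn S ↔ ∀ i ∈ S, c i = 0 := by
  simp [vanishingOn]

theorem vanishingOn_union (S T : Set ι) :
    (vanishingOn (S ∪ T) : Submodule F (ι → F)) = vanishingOn S ⊓ vanishingOn T := by
  ext c
  simp only [mem_vanishingOn, Submodule.mem_inf, Set.mem_union]
  grind

theorem vanishingOn_empty : (vanishingOn ∅ : Submodule F (ι → F)) = ⊤ := by
  ext c
  simp

theorem inf_vanishingOn_compl_eq_bot (S : Set ι) :
    (vanishingOn S ⊓ vanishingOn Sᶜ : Submodule F (ι → F)) = ⊥ := by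
  rw [← vanishingOn_union, Set.union_compl_self, eq_bot_iff]
  intro c hc
  exact funext fun i => mem_vanishingOn.1 hc i trivial

variable [Fintype ι] [DecidableEq ι] [DecidableEq F]

/- Singleton bound for `W` punctured to `T`: deleting `m` coordinates of `T`, the restriction
to the remaining ones only kills words vanishing on all of `T`. -/
theorem finrank_add_le_card_add_finrank_inf_vanishingOn {W : Submodule F (ι → F)}
    {T : Finset ι} {m : ℕ} (hW : ∃ w ∈ W, ∃ j ∈ T, w j ≠ 0)
    (hdist : ∀ w ∈ W, (∃ j ∈ T, w j ≠ 0) → m < #{j ∈ T | w j ≠ 0}) :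
    finrank F W + m ≤ #T + finrank F ↥(W ⊓ vanishingOn T) := by
  obtain ⟨w₀, hw₀, hw₀T⟩ := hW
  obtain ⟨P, hPT, hP⟩ := exists_subset_card_eq
    ((hdist w₀ hw₀ hw₀T).trans_le (card_filter_le _ _)).le
  let ρ : W →ₗ[F] (↥(T \ P) → F) := (LinearMap.funLeft F F Subtype.val).comp W.subtype
  have hker : (LinearMap.ker ρ).map W.subtype ≤ W ⊓ vanishingOn T := by
    rintro _ ⟨w, hw, rfl⟩
    refine ⟨w.2, mem_vanishingOn.2 fun j hj => ?_⟩
    have hoff : ∀ j ∈ T \ P, (w : ι → F) j = 0 := fun j hj => congrFun hw ⟨j, hj⟩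
    by_contra hwj
    have hsupp : {j ∈ T | (w : ι → F) j ≠ 0} ⊆ P := fun j hj' => by
      rw [mem_filter] at hj'
      by_contra hjP
      exact hj'.2 (hoff j (mem_sdiff.2 ⟨hj'.1, hjP⟩))
    have := hdist w w.2 ⟨j, hj, hwj⟩
    have := card_le_card hsupp
    omega
  have hrank := LinearMap.finrank_range_add_finrank_ker ρ
  have hrange : finrank F (LinearMap.range ρ) ≤ #(T \ P) := by
    simpa only [finrank_fintype_fun_eq_card, Fintype.card_coe] using
      Submodule.finrank_le (LinearMap.range ρ)
  have hkerle := Submodule.finrank_mono hker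
  rw [Submodule.finrank_map_subtype_eq] at hkerle
  rw [card_sdiff_of_subset hPT] at hrange
  have := card_le_card hPT
  omega

variable {C : Submodule F (ι → F)}

theorem finrank_inf_vanishingOn_add_le_of_local {S J : Finset ι} {δ : ℕ}
    (hJ : ∀ c ∈ C, (∃ j ∈ J, c j ≠ 0) → δ ≤ #{j ∈ J | c j ≠ 0})
    {c : ι → F} (hc : c ∈ C ⊓ vanishingOn S) {i : ι} (hi : i ∈ J) (hci : c i ≠ 0) :
    finrank F ↥(C ⊓ vanishingOn S) + (δ - 1) ≤
      #(J \ S) + finrank F ↥(C ⊓ vanishingOn ↑(S ∪ J)) := by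
  have hunion : C ⊓ vanishingOn ↑(S ∪ J) = C ⊓ vanishingOn S ⊓ vanishingOn ↑(J \ S) := by
    rw [inf_assoc, ← vanishingOn_union, coe_sdiff, Set.union_sdiff_self, coe_union]
  rw [hunion]
  refine finrank_add_le_card_add_finrank_inf_vanishingOn ?_ fun w hw hwJS => ?_
  · have hiS : i ∉ S := fun hiS => hci (mem_vanishingOn.1 hc.2 i hiS)
    exact ⟨c, hc, i, mem_sdiff.2 ⟨hi, hiS⟩, hci⟩
  · obtain ⟨j, hj, hwj⟩ := hwJS
    have hwS := mem_vanishingOn.1 hw.2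
    have hsupp : {j ∈ J | w j ≠ 0} = {j ∈ J \ S | w j ≠ 0} := by
      ext l
      simp only [mem_filter, mem_sdiff]
      exact ⟨fun h => ⟨⟨h.1, fun hl => h.2 (hwS l hl)⟩, h.2⟩, fun h => ⟨h.1.1, h.2⟩⟩
    have hδ := hJ w hw.1 ⟨j, (mem_sdiff.1 hj).1, hwj⟩
    rw [hsupp] at hδ
    have hpos : 0 < #{j ∈ J \ S | w j ≠ 0} := card_pos.2 ⟨j, mem_filter.2 ⟨hj, hwj⟩⟩
    omega

theorem finrank_inf_vanishingOn_add_card_le {d : ℕ}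
    (hd : ∀ c ∈ C, c ≠ 0 → d ≤ hammingNorm c) {S : Finset ι} (hS : C ⊓ vanishingOn S ≠ ⊥) :
    finrank F ↥(C ⊓ vanishingOn S) + (d - 1) + #S ≤ Fintype.card ι := by
  have h := finrank_add_le_card_add_finrank_inf_vanishingOn (W := C ⊓ vanishingOn S)
    (T := Sᶜ) (m := d - 1) ?_ ?_
  · rw [coe_compl, inf_assoc, inf_vanishingOn_compl_eq_bot, inf_bot_eq, finrank_bot,
      card_compl] at h
    have := card_le_univ S
    omega
  · obtain ⟨c, hc, hc0⟩ := Submodule.exists_mem_ne_zero_of_ne_bot hS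
    obtain ⟨j, hj⟩ := Function.ne_iff.1 hc0
    exact ⟨c, hc, j, mem_compl.2 fun hjS => hj (mem_vanishingOn.1 hc.2 j hjS), hj⟩
  · rintro w hw ⟨j, -, hwj⟩
    have hw0 : w ≠ 0 := fun h => hwj (by simp [h])
    have hsupp : #{j ∈ Sᶜ | w j ≠ 0} = hammingNorm w := by
      unfold hammingNorm
      congr 1
      ext l
      simp only [mem_filter, mem_compl, mem_univ, true_and]
      exact ⟨And.right, fun h => ⟨fun hl => h (mem_vanishingOn.1 hw.2 l hl), h⟩⟩
    have := hd w hw.1 hw0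
    have := hammingNorm_pos_iff.2 hw0
    omega

theorem HasLocality.exists_finset_finrank_inf_vanishingOn {r δ : ℕ} (hloc : HasLocality C r δ) (t : ℕ)
    (ht : t * r < finrank F C) : ∃ S : Finset ι,
      finrank F C ≤ finrank F ↥(C ⊓ vanishingOn S) + t * r ∧
      finrank F C + t * (δ - 1) ≤ #S + finrank F ↥(C ⊓ vanishingOn S) := by
  induction t with
  | zero => exact ⟨∅, by rw [coe_empty, vanishingOn_empty, inf_top_eq]; simp⟩
  | succ t ih =>
    rw [add_one_mul] at ht ⊢
    obtain ⟨S, hrank, hcard⟩ := ih (by omega)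
    have hS : C ⊓ vanishingOn S ≠ ⊥ := mt Submodule.finrank_eq_zero.2 (by omega)
    obtain ⟨c, hc, hc0⟩ := Submodule.exists_mem_ne_zero_of_ne_bot hS
    obtain ⟨i, hi⟩ := Function.ne_iff.1 hc0
    obtain ⟨J, hiJ, hJ, hJdist⟩ := hloc i
    have hstep := finrank_inf_vanishingOn_add_le_of_local hJdist hc hiJ hi
    have hJS := card_le_card (sdiff_subset (s := J) (t := S))
    have hunion : #(S ∪ J) = #S + #(J \ S) := by
      rw [← card_union_of_disjoint disjoint_sdiff, union_sdiff_self_eq_union]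
    refine ⟨S ∪ J, by omega, ?_⟩
    rw [add_one_mul]
    omega

end

theorem ceil_div_sub_one_mul_lt {k r : ℕ} (hk : 0 < k) : (⌈(k : ℚ) / r⌉₊ - 1) * r < k := by
  rcases r.eq_zero_or_pos with rfl | hr
  · simpa using hk
  · have hceil : 0 < ⌈(k : ℚ) / r⌉₊ := Nat.ceil_pos.2 (by positivity)
    have hlt : ¬ ⌈(k : ℚ) / r⌉₊ ≤ ⌈(k : ℚ) / r⌉₊ - 1 := by omega
    rw [Nat.ceil_le, not_le, lt_div_iff₀ (by positivity)] at hlt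
    exact_mod_cast hlt

theorem stmt1_general {F : Type*} [Field F] [DecidableEq F]
    {n k d r δ : ℕ} (hδ : 2 ≤ δ)
    (C : Submodule F (Fin n → F))
    (hk : Module.finrank F C = k) (hd : IsMinDist C d)
    (hloc : HasLocality C r δ) :
    (d : ℤ) ≤ (n : ℤ) - k + 1 - (⌈(k : ℚ) / (r : ℚ)⌉ - 1) * ((δ : ℤ) - 1) := by
  obtain ⟨c, hc, hc0, rfl⟩ := hd.2
  have hk0 : 0 < k := by
    rw [← hk, Nat.pos_iff_ne_zero, Ne, Submodule.finrank_eq_zero]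
    exact fun h => hc0 ((Submodule.mem_bot F).1 (h ▸ hc))
  set t := ⌈(k : ℚ) / r⌉₊ - 1
  have ht : t * r < k := ceil_div_sub_one_mul_lt hk0
  obtain ⟨S, hrank, hcard⟩ := hloc.exists_finset_finrank_inf_vanishingOn t (hk ▸ ht)
  have hS : C ⊓ vanishingOn S ≠ ⊥ := mt Submodule.finrank_eq_zero.2 (by omega)
  have hsingleton := finrank_inf_vanishingOn_add_card_le hd.1 hS
  rw [Fintype.card_fin] at hsingleton
  have hd0 := hammingNorm_pos_iff.2 hc0
  have hnat : hammingNorm c + k + t * (δ - 1) ≤ n + 1 := by omega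
  have hceil : ⌈(k : ℚ) / r⌉ - 1 ≤ (t : ℤ) := by
    rw [← Int.natCast_ceil_eq_ceil (by positivity)]
    omega
  have := mul_le_mul_of_nonneg_right hceil (by omega : (0 : ℤ) ≤ δ - 1)
  zify [(by omega : 1 ≤ δ)] at hnat
  linarith

/-- Singleton-type bound for `(r,δ)`-LRCs:
`d ≤ n - k + 1 - (⌈k/r⌉ - 1)(δ - 1)`. -/
theorem stmt1 {F : Type*} [Field F] [Fintype F] [DecidableEq F]
    {n k d r δ : ℕ} (hr : 1 ≤ r) (hδ : 2 ≤ δ)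
    (C : Submodule F (Fin n → F))
    (hk : Module.finrank F C = k) (hd : IsMinDist C d)
    (hloc : HasLocality C r δ) :
    (d : ℤ) ≤ (n : ℤ) - k + 1 - (⌈(k : ℚ) / (r : ℚ)⌉ - 1) * ((δ : ℤ) - 1) :=
  stmt1_general hδ C hk hd hloc
end

section
/- Let C ⊆ F_q^n be a linear code of dimension k and minimum distance d such that every coordinate i has a repair set A_i ⊆ [n]\{i} of size at most r on which coordinate i is a function of the coordinates in A_i (locality r). Then d ≤ n - k - ⌈k/r⌉ + 2. -/
namespace LRCAux

open Module

variable {F : Type*} [Field F] [Fintype F] [DecidableEq F] {n : ℕ}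
  (C : Submodule F (Fin n → F))

/-- Vectors vanishing on `S`. -/
def Z (S : Finset (Fin n)) : Submodule F (Fin n → F) where
  carrier := {c | ∀ j ∈ S, c j = 0}
  add_mem' := by intro a b ha hb j hj; simp [ha j hj, hb j hj]
  zero_mem' := by intro j hj; rfl
  smul_mem' := by intro r a ha j hj; simp [ha j hj]

/-- Codewords vanishing on `S`. -/
def K (S : Finset (Fin n)) : Submodule F (Fin n → F) := C ⊓ Z S

lemma mem_K {c : Fin n → F} {S : Finset (Fin n)} :
    c ∈ K C S ↔ c ∈ C ∧ ∀ j ∈ S, c j = 0 := Iff.rfl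

lemma K_mono {S T : Finset (Fin n)} (h : S ⊆ T) : K C T ≤ K C S := by
  intro c hc
  exact ⟨hc.1, fun j hj => hc.2 j (h hj)⟩

set_option synthInstance.maxHeartbeats 1000000 in
lemma finrank_le_insert (S : Finset (Fin n)) (j : Fin n) :
    finrank F (K C S) ≤ finrank F (K C (insert j S)) + 1 := by
  classical
  have hle : K C (insert j S) ≤ K C S := K_mono C (Finset.subset_insert j S)
  let f : (K C S) →ₗ[F] F := (LinearMap.proj j).comp (K C S).subtype
  have hker : LinearMap.ker f = Submodule.comap (K C S).subtype (K C (insert j S)) := by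
    ext ⟨c, hc⟩
    simp only [LinearMap.mem_ker, Submodule.mem_comap, LinearMap.comp_apply,
      Submodule.subtype_apply, LinearMap.proj_apply, f, mem_K]
    constructor
    · intro h
      refine ⟨hc.1, fun i hi => ?_⟩
      rcases Finset.mem_insert.1 hi with h' | h'
      · rw [h']; exact h
      · exact hc.2 i h'
    · intro h
      exact h.2 j (Finset.mem_insert_self j S)
  have h1 : finrank F (LinearMap.ker f) = finrank F (K C (insert j S)) := by
    rw [hker]; exact (Submodule.comapSubtypeEquivOfLe hle).finrank_eq
  have h2 := f.finrank_range_add_finrank_ker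
  have h3 : finrank F (LinearMap.range f) ≤ 1 := by
    simpa using Submodule.finrank_le (LinearMap.range f)
  omega

lemma finrank_le_union (S T : Finset (Fin n)) :
    finrank F (K C S) ≤ finrank F (K C (S ∪ T)) + T.card := by
  classical
  induction T using Finset.induction_on with
  | empty => rw [Finset.union_empty]; simp
  | @insert t T ht ih =>
    have h1 : finrank F (K C (S ∪ T)) ≤ finrank F (K C (insert t (S ∪ T))) + 1 :=
      finrank_le_insert C (S ∪ T) t
    rw [Finset.union_insert]
    rw [Finset.card_insert_of_notMem ht]
    omega

lemma exists_one :
    ∀ (T S : Finset (Fin n)), 1 ≤ finrank F (K C S) → finrank F (K C (S ∪ T)) = 0 →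
      ∃ B ⊆ T, finrank F (K C (S ∪ B)) = 1 := by
  classical
  intro T
  induction T using Finset.induction_on with
  | empty =>
    intro S h1 h0
    rw [Finset.union_empty] at h0
    omega
  | @insert t T htT ih =>
    intro S h1 h0
    by_cases h : finrank F (K C S) = 1
    · exact ⟨∅, Finset.empty_subset _, by rw [Finset.union_empty]; exact h⟩
    · have h1' : 1 ≤ finrank F (K C (insert t S)) := by
        have := finrank_le_insert C S t
        omega
      have h0' : finrank F (K C (insert t S ∪ T)) = 0 := by
        rw [Finset.insert_union, ← Finset.union_insert]
        exact h0
      obtain ⟨B, hBT, hB⟩ := ih (insert t S) h1' h0'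
      refine ⟨insert t B, Finset.insert_subset_insert t hBT, ?_⟩
      rw [Finset.union_insert, ← Finset.insert_union]
      exact hB

lemma K_collapse {S A : Finset (Fin n)} {i : Fin n}
    (hA : ∀ c₁ ∈ C, ∀ c₂ ∈ C, (∀ j ∈ A, c₁ j = c₂ j) → c₁ i = c₂ i) :
    K C (insert i (S ∪ A)) = K C (S ∪ A) := by
  refine le_antisymm (K_mono C (Finset.subset_insert _ _)) ?_
  intro c hc
  refine ⟨hc.1, fun j hj => ?_⟩
  rcases Finset.mem_insert.1 hj with h' | h'
  · subst h'
    have := hA c hc.1 0 (Submodule.zero_mem C) (fun j' hj' => by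
      rw [hc.2 j' (Finset.mem_union_right S hj')]; rfl)
    simpa using this
  · exact hc.2 j h'

lemma greedy {r : ℕ} (hr : 1 ≤ r)
    (hloc : ∀ i : Fin n, ∃ A : Finset (Fin n), i ∉ A ∧ A.card ≤ r ∧
      ∀ c₁ ∈ C, ∀ c₂ ∈ C, (∀ j ∈ A, c₁ j = c₂ j) → c₁ i = c₂ i) :
    ∀ m, ∀ S : Finset (Fin n), finrank F (K C S) = m → 1 ≤ m →
      ∃ S' : Finset (Fin n), ∃ ℓ : ℕ, 1 ≤ finrank F (K C S') ∧
        S.card + m + ℓ ≤ S'.card + 2 ∧ m ≤ ℓ * r := by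
  classical
  intro m
  induction m using Nat.strong_induction_on with
  | _ m ih =>
  intro S hm h1
  -- find a nonzero codeword vanishing on S
  have hKne : K C S ≠ ⊥ := by
    intro hbot
    rw [hbot] at hm
    simp [finrank_bot] at hm
    omega
  obtain ⟨c, hcK, hcne⟩ := Submodule.exists_mem_ne_zero_of_ne_bot hKne
  obtain ⟨i, hci⟩ : ∃ i, c i ≠ 0 := by
    by_contra h
    push_neg at h
    exact hcne (funext h)
  have hiS : i ∉ S := fun h => hci (hcK.2 i h)
  obtain ⟨A, hiA, hAr, hA⟩ := hloc i
  have hAS : S ∪ (A \ S) = S ∪ A := Finset.union_sdiff_self_eq_union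
  have hASr : (A \ S).card ≤ r := le_trans (Finset.card_le_card (Finset.sdiff_subset)) hAr
  have key : m ≤ finrank F (K C (S ∪ A)) + (A \ S).card := by
    have := finrank_le_union C S (A \ S)
    rw [hAS] at this
    omega
  by_cases h0 : finrank F (K C (S ∪ A)) = 0
  · -- partial (final) case
    have h0' : finrank F (K C (S ∪ (A \ S))) = 0 := by rw [hAS]; exact h0
    obtain ⟨B, hBsub, hB1⟩ := exists_one C (A \ S) S (by omega) h0'
    refine ⟨S ∪ B, 1, by rw [hB1], ?_, ?_⟩
    · have hdisj : Disjoint S B :=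
        Finset.disjoint_of_subset_right hBsub (Finset.sdiff_disjoint.symm)
      have hcard : (S ∪ B).card = S.card + B.card := Finset.card_union_of_disjoint hdisj
      have hmB : m ≤ 1 + B.card := by
        have := finrank_le_union C S B
        rw [hm, hB1] at this
        omega
      omega
    · omega
  · -- normal case
    have hm'1 : 1 ≤ finrank F (K C (S ∪ A)) := by omega
    have hcollapse := K_collapse C (S := S) hA
    have hdrop : finrank F (K C (S ∪ A)) < m := by
      have hlt : K C (insert i S) < K C S := by
        refine lt_of_le_of_ne (K_mono C (Finset.subset_insert _ _)) ?_
        intro heq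
        have : c ∈ K C (insert i S) := by rw [heq]; exact hcK
        exact hci (this.2 i (Finset.mem_insert_self i S))
      have h2 : finrank F (K C (insert i S)) < finrank F (K C S) :=
        Submodule.finrank_lt_finrank_of_lt hlt
      have h3 : K C (insert i (S ∪ A)) ≤ K C (insert i S) :=
        K_mono C (Finset.insert_subset_insert i Finset.subset_union_left)
      have h4 : finrank F (K C (insert i (S ∪ A))) ≤ finrank F (K C (insert i S)) :=
        Submodule.finrank_mono h3
      rw [hcollapse] at h4
      omega
    obtain ⟨S', ℓ', h1'', hcard, hlr⟩ :=
      ih _ hdrop (insert i (S ∪ A)) (by rw [hcollapse]) hm'1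
    refine ⟨S', ℓ' + 1, h1'', ?_, ?_⟩
    · have hiSA : i ∉ S ∪ A := by
        simp only [Finset.mem_union]
        rintro (h | h)
        exacts [hiS h, hiA h]
      have hc1 : (insert i (S ∪ A)).card = (S ∪ A).card + 1 :=
        Finset.card_insert_of_notMem hiSA
      have hc2 : (S ∪ A).card = S.card + (A \ S).card := by
        rw [← hAS]
        exact Finset.card_union_of_disjoint (Finset.disjoint_sdiff)
      omega
    · have : m ≤ ℓ' * r + r := by omega
      calc m ≤ ℓ' * r + r := this
        _ = (ℓ' + 1) * r := by ring

end LRCAux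

/-- Singleton-type bound for LRCs with locality `r`: if every coordinate `i` has a repair set
`A_i ⊆ [n] \ {i}` of size at most `r` on which the value of coordinate `i` is a function of the
coordinates in `A_i`, then `d ≤ n - k - ⌈k/r⌉ + 2`. -/
theorem stmt2 {F : Type*} [Field F] [Fintype F] [DecidableEq F]
    {n k d r : ℕ} (hr : 1 ≤ r)
    (C : Submodule F (Fin n → F))
    (hk : Module.finrank F C = k) (hd : IsMinDist C d)
    (hloc : ∀ i : Fin n, ∃ A : Finset (Fin n), i ∉ A ∧ A.card ≤ r ∧
      ∀ c₁ ∈ C, ∀ c₂ ∈ C, (∀ j ∈ A, c₁ j = c₂ j) → c₁ i = c₂ i) :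
    (d : ℤ) ≤ (n : ℤ) - k - ⌈(k : ℚ) / (r : ℚ)⌉ + 2 := by
  classical
  open LRCAux in
  obtain ⟨hdle, c₀, hc₀C, hc₀ne, _⟩ := hd
  have hk1 : 1 ≤ k := by
    rcases Nat.eq_zero_or_pos k with h | h
    · exfalso
      rw [h] at hk
      have : C = ⊥ := Submodule.finrank_eq_zero.mp hk
      rw [this] at hc₀C
      exact hc₀ne (Submodule.mem_bot F |>.mp hc₀C)
    · exact h
  have hK0 : Module.finrank F (K C ∅) = k := by
    have hKC : K C ∅ = C := by
      ext c
      simp [mem_K]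
    rw [hKC, hk]
  obtain ⟨S, ℓ, hS1, hcard, hlr⟩ := greedy C hr hloc k ∅ hK0 hk1
  have hKne : K C S ≠ ⊥ := by
    intro hbot
    rw [hbot] at hS1
    simp [finrank_bot] at hS1
  obtain ⟨c, hcK, hcne⟩ := Submodule.exists_mem_ne_zero_of_ne_bot hKne
  have hdn : d + S.card ≤ n := by
    have h1 : d ≤ hammingNorm c := hdle c hcK.1 hcne
    have hsub : ({i | c i ≠ 0} : Finset (Fin n)) ⊆ Sᶜ := by
      intro i hi
      simp only [Finset.mem_filter, Finset.mem_univ, true_and] at hi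
      simp only [Finset.mem_compl]
      intro hiS
      exact hi (hcK.2 i hiS)
    have h2 : hammingNorm c ≤ Sᶜ.card := Finset.card_le_card hsub
    have h3 : Sᶜ.card = n - S.card := by
      rw [Finset.card_compl]
      simp
    have h4 : S.card ≤ n := by
      have := Finset.card_le_card (Finset.subset_univ S)
      simpa using this
    omega
  have hceil : ⌈(k : ℚ) / (r : ℚ)⌉ ≤ (ℓ : ℤ) := by
    rw [Int.ceil_le]
    rw [div_le_iff₀ (by exact_mod_cast Nat.lt_of_lt_of_le Nat.zero_lt_one hr : (0:ℚ) < r)]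
    exact_mod_cast hlr
  have hdn' : (d : ℤ) + S.card ≤ n := by exact_mod_cast hdn
  have hcard' : (k : ℤ) + ℓ ≤ S.card + 2 := by
    have h := hcard
    rw [Finset.card_empty] at h
    omega
  omega
end

section
/- Suppose C is an (r,δ)-LRC of length n, S ⊆ [n], and Δ is a positive integer with Δ ≤ |S|. Then there exist subsets A, T ⊆ [n] such that A ⊆ S ∩ T, |A| = (δ-1)·⌊Δ/(r+δ-1)⌋, |S ∩ T| ≤ Δ, and every codeword restricted to T is determined by its restriction to T\A (i.e., the projection C|_T → C|_{T\A} is injective, so C|_T can be generated by C|_{T\A}). -/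
/-! Greedy construction, keeping `A ⊆ S ∩ T` with `T \ A` determining `T`. Pick `s ∈ S \ T`, a
recovery set `R ∋ s`, and among the new positions `P = (S ∩ R) \ T` a set `U` of
`min (δ - 1) |P|` positions; adjoin `R \ U` to `T` and put some `V ⊆ U` into both `T` and `A`.
As `|U| < δ`, the rest of `R` recovers `U`. The step costs `|P| - |U| + |V|` positions of `S`:
exactly `|V|` if `|P| < δ - 1`, and at most `|V| + r` otherwise, when `V` may take `δ - 1`
erasures at once. So `(δ - 1) m` erasures cost at most `(r + δ - 1) m`, which is at most `Δ` for
`m = ⌊Δ / (r + δ - 1)⌋`. -/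

section

open Finset

variable {ι F : Type*} [Ring F]

/-- The values of codewords of `C` on `D` determine their values on `E`, stated for differences
of codewords (see `Determines.eq_of_eq`). -/
def Determines (C : Submodule F (ι → F)) (D E : Finset ι) : Prop :=
  ∀ c ∈ C, (∀ i ∈ D, c i = 0) → ∀ i ∈ E, c i = 0

namespace Determines

variable {C : Submodule F (ι → F)} {D E : Finset ι}

theorem eq_of_eq (h : Determines C D E) :
    ∀ c₁ ∈ C, ∀ c₂ ∈ C, (∀ i ∈ D, c₁ i = c₂ i) → ∀ i ∈ E, c₁ i = c₂ i := by
  intro c₁ hc₁ c₂ hc₂ hD i hi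
  simpa [sub_eq_zero] using h (c₁ - c₂) (sub_mem hc₁ hc₂) (by simpa [sub_eq_zero]) i hi

variable [DecidableEq ι]

theorem sdiff_of_card_lt [DecidableEq F] {R U : Finset ι} {δ : ℕ}
    (hR : ∀ c ∈ C, (∃ i ∈ R, c i ≠ 0) → δ ≤ (R.filter fun i => c i ≠ 0).card)
    (hU : #U < δ) : Determines C (R \ U) R := by
  intro c hc hRU
  by_contra! hne
  have hsupp : (R.filter fun i => c i ≠ 0) ⊆ U := by
    intro i hi
    rw [mem_filter] at hi
    by_contra hiU
    exact hi.2 (hRU i (mem_sdiff.mpr ⟨hi.1, hiU⟩))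
  have := card_le_card hsupp
  have := hR c hc hne
  omega

theorem union_sdiff_union {A T R U V : Finset ι} (hT : Determines C (T \ A) T) (hAT : A ⊆ T)
    (hR : Determines C (R \ U) R) (hUR : U ⊆ R) (hUT : Disjoint U T) (hVU : V ⊆ U) :
    Determines C ((T ∪ (R \ U) ∪ V) \ (A ∪ V)) (T ∪ (R \ U) ∪ V) := by
  intro c hc h0
  have hT0 : ∀ i ∈ T, c i = 0 := hT c hc fun i hi => h0 i <| by
    have := disjoint_left.mp hUT
    grind
  have hR0 : ∀ i ∈ R, c i = 0 := hR c hc fun i hi => by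
    by_cases hiT : i ∈ T
    · exact hT0 i hiT
    · exact h0 i (by grind)
  grind

end Determines

variable [DecidableEq ι]

theorem card_inter_union_sdiff_union_le {S T R U V : Finset ι} (hU : U ⊆ (S ∩ R) \ T) :
    #(S ∩ (T ∪ (R \ U) ∪ V)) ≤ #(S ∩ T) + (#((S ∩ R) \ T) - #U) + #V := by
  have hsub : S ∩ (T ∪ (R \ U) ∪ V) ⊆ (S ∩ T) ∪ (((S ∩ R) \ T) \ U) ∪ V := by
    intro x
    simp only [mem_inter, mem_union, mem_sdiff]
    tauto
  calc #(S ∩ (T ∪ (R \ U) ∪ V)) ≤ #((S ∩ T) ∪ (((S ∩ R) \ T) \ U) ∪ V) := card_le_card hsub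
    _ ≤ #(S ∩ T) + #(((S ∩ R) \ T) \ U) + #V :=
        (card_union_le _ _).trans (Nat.add_le_add_right (card_union_le _ _) _)
    _ = #(S ∩ T) + (#((S ∩ R) \ T) - #U) + #V := by rw [card_sdiff_of_subset hU]

section Greedy

variable [DecidableEq F] {κ : Type*} {C : Submodule F (ι → F)} {S' : κ → Finset ι} {r δ : ℕ}
  (hcover : ∀ i, ∃ j, i ∈ S' j) (hcard : ∀ j, #(S' j) ≤ r + δ - 1)
  (hloc : ∀ j, ∀ c ∈ C, (∃ i ∈ S' j, c i ≠ 0) → δ ≤ ((S' j).filter fun i => c i ≠ 0).card)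
include hcover hcard hloc

theorem exists_erasure_step (hδ : 2 ≤ δ) {S A T : Finset ι} {N : ℕ} (hAS : A ⊆ S ∩ T)
    (hT : Determines C (T \ A) T) (hST : #(S ∩ T) < #S) (hN : 0 < N) :
    ∃ A' T' g, A' ⊆ S ∩ T' ∧ Determines C (T' \ A') T' ∧ #A' = #A + g ∧ 0 < g ∧ g ≤ N ∧
      (#(S ∩ T') ≤ #(S ∩ T) + g ∨ g = min (δ - 1) N ∧ #(S ∩ T') ≤ #(S ∩ T) + g + r) := by
  obtain ⟨s, hsS, hsST⟩ := exists_mem_notMem_of_card_lt_card hST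
  obtain ⟨j, hsj⟩ := hcover s
  set P := (S ∩ S' j) \ T
  have hP : 0 < #P := card_pos.mpr ⟨s, by grind⟩
  obtain ⟨V, hVP, hV⟩ := exists_subset_card_eq (s := P) (n := min (min (δ - 1) #P) N) (by omega)
  obtain ⟨U, hVU, hUP, hU⟩ :=
    exists_subsuperset_card_eq (n := min (δ - 1) #P) hVP (by omega) (by omega)
  have hAT : A ⊆ T := hAS.trans inter_subset_right
  have hUR : U ⊆ S' j := hUP.trans (sdiff_subset.trans inter_subset_right)
  have hUT : Disjoint U T := disjoint_of_subset_left hUP sdiff_disjoint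
  have hPcard : #P ≤ r + δ - 1 :=
    (card_le_card (sdiff_subset.trans inter_subset_right)).trans (hcard j)
  have hcost : #(S ∩ (T ∪ (S' j \ U) ∪ V)) ≤ #(S ∩ T) + (#P - #U) + #V :=
    card_inter_union_sdiff_union_le hUP
  refine ⟨A ∪ V, T ∪ (S' j \ U) ∪ V, #V, ?_, ?_, ?_, by omega, by omega, ?_⟩
  · have hVS : V ⊆ S := hVP.trans (sdiff_subset.trans inter_subset_left)
    exact union_subset (hAS.trans (inter_subset_inter_left (subset_union_left.trans
      subset_union_left))) (subset_inter hVS subset_union_right)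
  · exact hT.union_sdiff_union hAT
      (Determines.sdiff_of_card_lt (hloc j) (by omega)) hUR hUT hVU
  · exact card_union_of_disjoint
      (disjoint_of_subset_left hAT (disjoint_of_subset_left hVU hUT).symm)
  · rcases le_or_gt (δ - 1) #P with hfull | hpartial
    · right; omega
    · left; omega

/-- `k` counts the remaining steps allowed to cost `r` more than they gain; it stands for
`⌈N / (δ - 1)⌉`. -/
theorem exists_erasure_of_budget (hδ : 2 ≤ δ) {S : Finset ι} {Δ : ℕ} (hΔS : Δ ≤ #S) (N : ℕ) :
    ∀ k, N ≤ (δ - 1) * k → ∀ A T, A ⊆ S ∩ T → Determines C (T \ A) T →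
      #(S ∩ T) + N + r * k ≤ Δ →
      ∃ A' T', A' ⊆ S ∩ T' ∧ #A' = #A + N ∧ #(S ∩ T') ≤ Δ ∧ Determines C (T' \ A') T' := by
  induction N using Nat.strong_induction_on with
  | _ N ih =>
  intro k hNk A T hAS hT hbudget
  rcases Nat.eq_zero_or_pos N with rfl | hN
  · exact ⟨A, T, hAS, rfl, by omega, hT⟩
  obtain ⟨A', T', g, hA'S, hT', hA', hg, hgN, hcost⟩ :=
    exists_erasure_step hcover hcard hloc hδ hAS hT (by omega) hN
  obtain ⟨k', hk'N, hk'⟩ :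
      ∃ k', N - g ≤ (δ - 1) * k' ∧ #(S ∩ T') + (N - g) + r * k' ≤ Δ := by
    rcases hcost with hcost | ⟨rfl, hcost⟩
    · exact ⟨k, by omega, by omega⟩
    · obtain ⟨k', rfl⟩ := Nat.exists_eq_add_one_of_ne_zero (by rintro rfl; omega : k ≠ 0)
      rw [mul_add_one] at hNk
      rw [mul_add_one] at hbudget
      exact ⟨k', by omega, by omega⟩
  obtain ⟨A'', T'', hA''S, hA'', hT''card, hT''⟩ :=
    ih (N - g) (by omega) k' hk'N A' T' hA'S hT' hk'
  exact ⟨A'', T'', hA''S, by omega, hT''card, hT''⟩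

end Greedy

end

theorem stmt3_general {F : Type*} [Field F] [DecidableEq F]
    {n r δ ℓ : ℕ} (hδ : 2 ≤ δ)
    (C : Submodule F (Fin n → F))
    (S' : Fin ℓ → Finset (Fin n))
    (hcover : ∀ i : Fin n, ∃ j, i ∈ S' j)
    (hcard : ∀ j, (S' j).card ≤ r + δ - 1)
    (hloc : ∀ j, ∀ c ∈ C, (∃ i ∈ S' j, c i ≠ 0) →
        δ ≤ ((S' j).filter fun i => c i ≠ 0).card)
    (S : Finset (Fin n)) (Δ : ℕ) (hΔS : Δ ≤ S.card) :
    ∃ A T : Finset (Fin n), A ⊆ S ∩ T ∧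
      A.card = (δ - 1) * (Δ / (r + δ - 1)) ∧
      (S ∩ T).card ≤ Δ ∧
      ∀ c₁ ∈ C, ∀ c₂ ∈ C, (∀ i ∈ T \ A, c₁ i = c₂ i) → ∀ i ∈ T, c₁ i = c₂ i := by
  set m := Δ / (r + δ - 1)
  have hbudget : (δ - 1) * m + r * m ≤ Δ :=
    calc (δ - 1) * m + r * m = m * (r + δ - 1) := by
          rw [← add_mul, mul_comm, show δ - 1 + r = r + δ - 1 by omega]
      _ ≤ Δ := Nat.div_mul_le_self Δ _
  obtain ⟨A, T, hAS, hA, hST, hT⟩ := exists_erasure_of_budget hcover hcard hloc hδ hΔS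
    ((δ - 1) * m) m le_rfl ∅ ∅ (Finset.empty_subset _)
    (fun _ _ _ _ h => absurd h (Finset.notMem_empty _)) (by simpa using hbudget)
  exact ⟨A, T, hAS, by simpa using hA, hST, hT.eq_of_eq⟩

/-- Lemma (A, T): for an `(r,δ)`-LRC `C` of length `n` (with recovery-set cover
`S'_1, …, S'_ℓ`), any `S ⊆ [n]` and any positive `Δ ≤ |S|`, there exist `A, T ⊆ [n]`
with `A ⊆ S ∩ T`, `|A| = (δ-1)·⌊Δ/(r+δ-1)⌋`, `|S ∩ T| ≤ Δ`, and such that every codeword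
restricted to `T` is determined by its restriction to `T \ A`. -/
theorem stmt3 {F : Type*} [Field F] [Fintype F] [DecidableEq F]
    {n r δ ℓ : ℕ} (hr : 1 ≤ r) (hδ : 2 ≤ δ)
    (C : Submodule F (Fin n → F))
    (S' : Fin ℓ → Finset (Fin n))
    (hcover : ∀ i : Fin n, ∃ j, i ∈ S' j)
    (hcard : ∀ j, (S' j).card ≤ r + δ - 1)
    (hloc : ∀ j, ∀ c ∈ C, (∃ i ∈ S' j, c i ≠ 0) →
        δ ≤ ((S' j).filter fun i => c i ≠ 0).card)
    (S : Finset (Fin n)) (Δ : ℕ) (hΔ : 1 ≤ Δ) (hΔS : Δ ≤ S.card) :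
    ∃ A T : Finset (Fin n), A ⊆ S ∩ T ∧
      A.card = (δ - 1) * (Δ / (r + δ - 1)) ∧
      (S ∩ T).card ≤ Δ ∧
      ∀ c₁ ∈ C, ∀ c₂ ∈ C, (∀ i ∈ T \ A, c₁ i = c₂ i) → ∀ i ∈ T, c₁ i = c₂ i :=
  stmt3_general hδ C S' hcover hcard hloc S Δ hΔS
end

section
/- Let [n] = S'_1 ∪ … ∪ S'_ℓ with each |S'_i| ≤ r+δ-1, and let S ⊆ [n]. Write S_i = S'_i ∩ S. Construct pairwise disjoint sets Q_1,…,Q_ℓ greedily by Q_{j+1} = S_{j+1}\(S_1∪…∪S_j) if this set has size < δ-1, and otherwise any (δ-1)-subset of it. Then |Q_1 ∪ … ∪ Q_ℓ| ≥ ⌈(δ-1)|S| / (r+δ-1)⌉. -/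
/-- The greedy construction of the pairwise disjoint sets `Q_1, …, Q_ℓ` from the recovery-set
cover `S'_1, …, S'_ℓ` of `[n]` (each of size at most `r+δ-1`) satisfies
`|Q_1 ∪ … ∪ Q_ℓ| ≥ ⌈(δ-1)|S| / (r+δ-1)⌉`. -/
theorem stmt4 {n r δ ℓ : ℕ} (hr : 1 ≤ r) (hδ : 2 ≤ δ)
    (S' : ℕ → Finset (Fin n))
    (hcover : ∀ i : Fin n, ∃ j < ℓ, i ∈ S' j)
    (hcard : ∀ j < ℓ, (S' j).card ≤ r + δ - 1)
    (S : Finset (Fin n)) (Q : ℕ → Finset (Fin n))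
    (hQ : ∀ j < ℓ,
      if ((S' j ∩ S) \ ((Finset.range j).biUnion (fun i => S' i ∩ S))).card < δ - 1 then
        Q j = (S' j ∩ S) \ ((Finset.range j).biUnion (fun i => S' i ∩ S))
      else
        Q j ⊆ (S' j ∩ S) \ ((Finset.range j).biUnion (fun i => S' i ∩ S)) ∧
          (Q j).card = δ - 1) :
    ⌈(((δ : ℚ) - 1) * S.card) / ((r : ℚ) + (δ : ℚ) - 1)⌉₊ ≤
      ((Finset.range ℓ).biUnion Q).card := by
  set T : ℕ → Finset (Fin n) :=
    fun j => (S' j ∩ S) \ ((Finset.range j).biUnion (fun i => S' i ∩ S)) with hT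
  have hQsub : ∀ j < ℓ, Q j ⊆ T j := by
    intro j hj
    have h := hQ j hj
    split_ifs at h with hc
    · rw [h]
    · exact h.1
  have hTd : ∀ i j, i < j → Disjoint (T i) (T j) := by
    intro i j hij
    apply Finset.disjoint_left.mpr
    intro a hai haj
    have hmem : a ∈ (Finset.range j).biUnion (fun i => S' i ∩ S) :=
      Finset.mem_biUnion.mpr ⟨i, Finset.mem_range.mpr hij, (Finset.mem_sdiff.mp hai).1⟩
    exact (Finset.mem_sdiff.mp haj).2 hmem
  have hQd : ∀ i ∈ Finset.range ℓ, ∀ j ∈ Finset.range ℓ, i ≠ j → Disjoint (Q i) (Q j) := by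
    intro i hi j hj hne
    rcases lt_or_gt_of_ne hne with h | h
    · exact (hTd i j h).mono (hQsub i (Finset.mem_range.mp hi)) (hQsub j (Finset.mem_range.mp hj))
    · exact ((hTd j i h).mono (hQsub j (Finset.mem_range.mp hj))
        (hQsub i (Finset.mem_range.mp hi))).symm
  have hcardQ : ((Finset.range ℓ).biUnion Q).card = ∑ j ∈ Finset.range ℓ, (Q j).card :=
    Finset.card_biUnion hQd
  have hTunion : (Finset.range ℓ).biUnion T = S := by
    apply Finset.Subset.antisymm
    · intro a ha
      obtain ⟨j, hj, haj⟩ := Finset.mem_biUnion.mp ha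
      exact (Finset.mem_inter.mp (Finset.mem_sdiff.mp haj).1).2
    · intro s hs
      have hex : ∃ j, j < ℓ ∧ s ∈ S' j := by
        obtain ⟨j, hj, hsj⟩ := hcover s; exact ⟨j, hj, hsj⟩
      have hjspec := Nat.find_spec hex
      refine Finset.mem_biUnion.mpr ⟨Nat.find hex, Finset.mem_range.mpr hjspec.1, ?_⟩
      refine Finset.mem_sdiff.mpr ⟨Finset.mem_inter.mpr ⟨hjspec.2, hs⟩, ?_⟩
      intro hmem
      obtain ⟨i, hi, hsi⟩ := Finset.mem_biUnion.mp hmem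
      have hi' := Finset.mem_range.mp hi
      exact Nat.find_min hex hi' ⟨hi'.trans hjspec.1, (Finset.mem_inter.mp hsi).1⟩
  have hcardT : ∑ j ∈ Finset.range ℓ, (T j).card = S.card := by
    rw [← hTunion]
    refine (Finset.card_biUnion ?_).symm
    intro i hi j hj hne
    rcases lt_or_gt_of_ne hne with h | h
    · exact hTd i j h
    · exact (hTd j i h).symm
  have hkey : (δ - 1) * S.card ≤ (r + δ - 1) * ((Finset.range ℓ).biUnion Q).card := by
    rw [hcardQ, ← hcardT, Finset.mul_sum, Finset.mul_sum]
    apply Finset.sum_le_sum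
    intro j hj
    have hjℓ := Finset.mem_range.mp hj
    have hQj := hQ j hjℓ
    split_ifs at hQj with h
    · rw [hQj]
      exact Nat.mul_le_mul (by omega) le_rfl
    · have h1 : (T j).card ≤ r + δ - 1 :=
        calc (T j).card ≤ (S' j ∩ S).card := Finset.card_le_card Finset.sdiff_subset
        _ ≤ (S' j).card := Finset.card_le_card Finset.inter_subset_left
        _ ≤ r + δ - 1 := hcard j hjℓ
      rw [hQj.2]
      calc (δ - 1) * (T j).card ≤ (δ - 1) * (r + δ - 1) := Nat.mul_le_mul_left _ h1
      _ = (r + δ - 1) * (δ - 1) := Nat.mul_comm _ _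
  have hpos : (0 : ℚ) < (r : ℚ) + (δ : ℚ) - 1 := by
    have h1 : (1 : ℚ) ≤ (r : ℚ) := by exact_mod_cast hr
    have h2 : (2 : ℚ) ≤ (δ : ℚ) := by exact_mod_cast hδ
    linarith
  rw [Nat.ceil_le, div_le_iff₀ hpos]
  have h1 : (1 : ℕ) ≤ δ := by omega
  have h2 : (1 : ℕ) ≤ r + δ := by omega
  qify [h1, h2] at hkey
  linarith
end

section
/- Let f(x) = x² + ax + b ∈ F_q[x] be a primitive polynomial of F_{q²} (i.e., of order q² - 1), and let η be the automorphism of F = F_q(x) defined by η(x) = 1/(-bx - a). Then in the degree-(q+1) extension F/F^{⟨η⟩}, the unique place of F of degree 2 that is totally ramified accounts for the entire different: deg Diff(F/F^{⟨η⟩}) = 2q, and hence every rational place of F is unramified in F/F^{⟨η⟩}; consequently the q+1 rational places of F form a single orbit of size q+1 under ⟨η⟩. -/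
/-!
A point of `P¹(F)` is a line in `F²` and `mobius g` is the action of `g` on lines, so a fixed
point of `(mobius M)^[j]` is an eigenvector of `M^j`. Both `M = [[0,1],[-b,-a]]` (Cayley–Hamilton)
and a root `r` of `x² + ax + b` in `F_{q²}` are annihilated by that polynomial, so `M^j = c + dM`
and `r^j = c + dr` with the same `c, d` (read off from `X^j mod (x² + ax + b)`). As `r` has order
`q² - 1`, `r^j ∉ F_q` for `0 < j < q + 1` (else `r^{j(q-1)} = 1`), hence `d ≠ 0`, and an
eigenvector of `M^j` would be one of `M`, whose eigenvalue would be a root of the irreducible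
`x² + ax + b`. So the first `q + 1` iterates of a point are distinct, i.e. they exhaust the
`q + 1` points of `P¹(F_q)`.
-/

/-- Möbius action on `P¹(F) = F ∪ {∞}`, modelled as `Option F` (rational places of `F_q(x)`). -/
def mobius {F : Type*} [Field F] [DecidableEq F]
    (g : Matrix (Fin 2) (Fin 2) F) : Option F → Option F
  | none => if g 1 0 = 0 then none else some (g 0 0 / g 1 0)
  | some x =>
      if g 1 0 * x + g 1 1 = 0 then none
      else some ((g 0 0 * x + g 0 1) / (g 1 0 * x + g 1 1))

open Polynomial Matrix

lemma Matrix.isRoot_of_mulVec_eq_smul {K n : Type*} [Field K] [Fintype n] [DecidableEq n]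
    {A : Matrix n n K} {p : K[X]} (hp : aeval A p = 0) {v : n → K} (hv : v ≠ 0) {μ : K}
    (h : A *ᵥ v = μ • v) : p.IsRoot μ := by
  have hA : Module.End.HasEigenvector (toLin' A) μ v :=
    Module.End.hasEigenvector_iff.2 ⟨Module.End.mem_eigenspace_iff.2 (by simpa using h), hv⟩
  have := Module.End.aeval_apply_of_hasEigenvector (p := p) hA
  rw [show aeval (toLin' A) p = toLin' (aeval A p) from aeval_algHom_apply toLinAlgEquiv' A p,
    hp, map_zero, LinearMap.zero_apply, eq_comm, smul_eq_zero] at this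
  exact this.resolve_right hv

lemma Matrix.mulVec_eq_smul_of_add_smul_mulVec_eq_smul {K n : Type*} [Field K] [Fintype n]
    [DecidableEq n] {A : Matrix n n K} {v : n → K} {c d μ : K} (hd : d ≠ 0)
    (h : (algebraMap K (Matrix n n K) c + d • A) *ᵥ v = μ • v) :
    A *ᵥ v = (d⁻¹ * (μ - c)) • v := by
  have hdA : d • (A *ᵥ v) = (μ - c) • v := by
    rw [sub_smul, ← h, add_mulVec, Algebra.algebraMap_eq_smul_one, smul_mulVec, one_mulVec,
      smul_mulVec]
    abel
  rw [mul_smul, ← hdA, inv_smul_smul₀ hd]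

section Mobius

variable {F : Type*} [Field F]

def homCoords : Option F → Fin 2 → F
  | none => ![1, 0]
  | some x => ![x, 1]

lemma homCoords_ne_zero (P : Option F) : homCoords P ≠ 0 := by
  cases P <;> simp [homCoords, funext_iff, Fin.forall_fin_two]

variable [DecidableEq F]

lemma exists_mulVec_homCoords_eq_smul (g : Matrix (Fin 2) (Fin 2) F) (P : Option F) :
    ∃ μ : F, g *ᵥ homCoords P = μ • homCoords (mobius g P) := by
  cases P with
  | none =>
    by_cases h : g 1 0 = 0
    · refine ⟨g 0 0, ?_⟩
      ext i; fin_cases i <;> simp [homCoords, mobius, h, mulVec, vecHead]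
    · refine ⟨g 1 0, ?_⟩
      ext i; fin_cases i <;> simp [homCoords, mobius, h, mulVec, vecHead, mul_div_cancel₀]
  | some x =>
    by_cases h : g 1 0 * x + g 1 1 = 0
    · refine ⟨g 0 0 * x + g 0 1, ?_⟩
      ext i; fin_cases i <;> simp [homCoords, mobius, h, mulVec, dotProduct]
    · refine ⟨g 1 0 * x + g 1 1, ?_⟩
      ext i; fin_cases i <;> simp [homCoords, mobius, h, mulVec, dotProduct, mul_div_cancel₀]

lemma exists_pow_mulVec_homCoords_eq_smul_iterate (g : Matrix (Fin 2) (Fin 2) F) (j : ℕ)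
    (P : Option F) :
    ∃ μ : F, (g ^ j) *ᵥ homCoords P = μ • homCoords ((mobius g)^[j] P) := by
  induction j generalizing P with
  | zero => exact ⟨1, by simp⟩
  | succ j ih =>
    obtain ⟨μ, hμ⟩ := exists_mulVec_homCoords_eq_smul g P
    obtain ⟨ν, hν⟩ := ih (mobius g P)
    refine ⟨μ * ν, ?_⟩
    rw [pow_succ, ← mulVec_mulVec, hμ, mulVec_smul, hν, Function.iterate_succ_apply, smul_smul]

lemma mobius_iterate_ne_self {g : Matrix (Fin 2) (Fin 2) F} {p : F[X]} (hp : aeval g p = 0)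
    (hroot : ∀ μ, ¬p.IsRoot μ) {j : ℕ} {c d : F} (hd : d ≠ 0)
    (hj : g ^ j = algebraMap F _ c + d • g) (P : Option F) : (mobius g)^[j] P ≠ P := by
  intro hP
  obtain ⟨μ, hμ⟩ := exists_pow_mulVec_homCoords_eq_smul_iterate g j P
  rw [hP, hj] at hμ
  exact hroot _ <| isRoot_of_mulVec_eq_smul hp (homCoords_ne_zero P)
    (mulVec_eq_smul_of_add_smul_mulVec_eq_smul hd hμ)

end Mobius

lemma pow_eq_algebraMap_add_smul_of_aeval_eq_zero {R A : Type*} [CommRing R] [Ring A]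
    [Algebra R A] {f : R[X]} (hf : f.Monic) (hdeg : f.natDegree = 2) {x : A}
    (hx : aeval x f = 0) (j : ℕ) :
    x ^ j = algebraMap R A ((X ^ j %ₘ f).coeff 0) + (X ^ j %ₘ f).coeff 1 • x := by
  have hf1 : f ≠ 1 := by rintro rfl; simp at hdeg
  have hlin : (X ^ j %ₘ f).natDegree ≤ 1 := by
    have := natDegree_modByMonic_lt (X ^ j) hf hf1
    omega
  rw [← aeval_X_pow (R := R), ← aeval_modByMonic_eq_self_of_root hx,
    eq_X_add_C_of_natDegree_le_one hlin]
  simp [Algebra.smul_def, add_comm]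

lemma pow_notMem_range_algebraMap_of_orderOf_eq {F K : Type*} [Field F] [Fintype F] [Ring K]
    [Nontrivial K] [Algebra F K] {x : K} (hx : orderOf x = Fintype.card F ^ 2 - 1) {j : ℕ}
    (hj0 : 0 < j) (hj : j < Fintype.card F + 1) : x ^ j ∉ Set.range (algebraMap F K) := by
  rintro ⟨c, hc⟩
  set q := Fintype.card F
  have hq : 1 < q := Fintype.one_lt_card
  have hq2 : q ^ 2 - 1 = (q + 1) * (q - 1) := by rw [← Nat.sq_sub_sq, one_pow]
  have hunit : IsUnit x :=
    (orderOf_pos_iff.1 (by rw [hx, hq2]; exact Nat.mul_pos (by omega) (by omega))).isUnit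
  have hc0 : c ≠ 0 := by
    rintro rfl
    exact (hunit.pow j).ne_zero (by rw [← hc, map_zero])
  have hpow : x ^ (j * (q - 1)) = 1 := by
    rw [pow_mul, ← hc, ← map_pow, FiniteField.pow_card_sub_one_eq_one c hc0, map_one]
  have hdvd : (q + 1) * (q - 1) ∣ j * (q - 1) := hq2 ▸ hx ▸ orderOf_dvd_of_pow_eq_one hpow
  have := Nat.le_of_dvd hj0 (Nat.dvd_of_mul_dvd_mul_right (by omega) hdvd)
  omega

lemma Function.exists_iterate_eq_of_forall_iterate_ne {α : Type*} [Fintype α] {f : α → α}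
    (hf : ∀ x j, 0 < j → j < Fintype.card α → f^[j] x ≠ x) (x y : α) :
    ∃ j, f^[j] x = y := by
  have hne : ∀ i j : ℕ, i < j → j < Fintype.card α → f^[i] x ≠ f^[j] x := by
    intro i j hij hj h
    refine hf (f^[i] x) (j - i) (by omega) (by omega) ?_
    rw [← Function.iterate_add_apply, Nat.sub_add_cancel hij.le, h]
  have hinj : Function.Injective fun j : Fin (Fintype.card α) => f^[j] x := by
    intro i j h
    rcases lt_trichotomy i j with hij | rfl | hij
    · exact absurd h (hne i j hij j.2)
    · rfl
    · exact absurd h.symm (hne j i hij i.2)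
  obtain ⟨j, hj⟩ :=
    ((Fintype.bijective_iff_injective_and_card _).2 ⟨hinj, Fintype.card_fin _⟩).surjective y
  exact ⟨j, hj⟩

/-- Let `f(x) = x² + ax + b ∈ F_q[x]` be a primitive polynomial of `F_{q²}` (its root has
multiplicative order `q² - 1`), and let `η` be the automorphism of `F = F_q(x)` given by
`η(x) = 1/(-bx - a)` (the Möbius transformation of the matrix `[[0,1],[-b,-a]]`).
Then in the degree-`(q+1)` extension `F/F^{⟨η⟩}` every rational place of `F` is unramified:
no nontrivial power `η^j` (`0 < j < q+1`) fixes any rational place, and consequently the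
`q+1` rational places of `F` form a single orbit of size `q+1` under `⟨η⟩`. -/
theorem stmt9 {F : Type*} [Field F] [Fintype F] [DecidableEq F] {q : ℕ}
    (hq : Fintype.card F = q) (a b : F)
    (hirr : Irreducible (Polynomial.X ^ 2 + Polynomial.C a * Polynomial.X + Polynomial.C b))
    (hprim : orderOf (AdjoinRoot.root
      (Polynomial.X ^ 2 + Polynomial.C a * Polynomial.X + Polynomial.C b)) = q ^ 2 - 1) :
    (∀ P : Option F, ∀ j : ℕ, 0 < j → j < q + 1 →
      (mobius !![(0 : F), 1; -b, -a])^[j] P ≠ P) ∧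
    (∀ P Q : Option F, ∃ j : ℕ, (mobius !![(0 : F), 1; -b, -a])^[j] P = Q) := by
  subst hq
  set f : F[X] := X ^ 2 + C a * X + C b
  set M : Matrix (Fin 2) (Fin 2) F := !![0, 1; -b, -a]
  have : Fact (Irreducible f) := ⟨hirr⟩
  have hf : f.Monic := by unfold f; monicity!
  have hdeg : f.natDegree = 2 := by unfold f; compute_degree!
  have hfM : aeval M f = 0 := by
    have hchar : M.charpoly = f := by
      rw [charpoly_fin_two, trace_fin_two_of, det_fin_two_of]
      simp [f]
    rw [← hchar, aeval_self_charpoly]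
  have hfr : aeval (AdjoinRoot.root f) f = 0 := by rw [AdjoinRoot.aeval_eq, AdjoinRoot.mk_self]
  have hfree : ∀ P : Option F, ∀ j : ℕ, 0 < j → j < Fintype.card F + 1 →
      (mobius M)^[j] P ≠ P := by
    intro P j hj0 hj
    have hd : (X ^ j %ₘ f).coeff 1 ≠ 0 := by
      intro hd
      refine pow_notMem_range_algebraMap_of_orderOf_eq hprim hj0 hj ⟨(X ^ j %ₘ f).coeff 0, ?_⟩
      rw [pow_eq_algebraMap_add_smul_of_aeval_eq_zero hf hdeg hfr, hd, zero_smul, add_zero]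
    exact mobius_iterate_ne_self hfM (fun _ => hirr.not_isRoot_of_natDegree_ne_one (by omega)) hd
      (pow_eq_algebraMap_add_smul_of_aeval_eq_zero hf hdeg hfM j) P
  refine ⟨hfree, Function.exists_iterate_eq_of_forall_iterate_ne ?_⟩
  simpa using hfree
end

section
/- Let s ≥ 2, a ≥ 1, δ ≥ 2, t' ≥ 1, k_I ≥ 1 with a·t' ≤ k_I - δ and t'(s·k_I + a) + δ - 1 ≤ q. Let r = s·k_I + a. Choose n_F - (t'-1)(δ-1) = t'·r + δ - 1 distinct elements α_{i,j} (i∈[st'], j∈[k_I]), β_{i',j'} (i'∈[t'], j'∈[a]), γ_ℓ (ℓ∈[δ-1]) of F_q, and let H^F be the block matrix with block-diagonal part A_1,…,A_{t'} where A_i is the (δ-1)×(r+δ-1) Vandermonde matrix on locators {α_{s(i-1)+1,·},…,α_{si,·}, β_{i,·}, γ_1,…,γ_{δ-1}}, and a bottom block row (B_1|…|B_{t'}) where B_i consists of rows δ-1 through at'+δ-2 of the Vandermonde matrix on the same locators. Then the code C^F with parity-check matrix H^F is an optimal (r,δ)-LRC with length n_F = t'(r+δ-1), dimension k_F = s·t'·k_I,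 and minimum distance d_F = a·t' + δ, meeting the Singleton-type bound d_F = n_F - k_F + 1 - (⌈k_F/r⌉ - 1)(δ-1). -/
open Polynomial Finset Matrix

section Aux

variable {F : Type*} [Field F] {ι : Type*} [DecidableEq ι]


variable {F : Type*} [Field F] {ι : Type*} [DecidableEq ι]

lemma coeff_prod_erase (A : Finset ι) (v : ι → F) {x : ι} (hx : x ∈ A) :
    ∀ t d, A.card ≤ d + t →
    (∏ y ∈ A.erase x, (X - C (v y))).coeff d
      = ∑ p ∈ Finset.Ioc d A.card, (∏ y ∈ A, (X - C (v y))).coeff p * v x ^ (p - 1 - d) := by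
  have hB : (∏ y ∈ A, (X - C (v y))) = (X - C (v x)) * ∏ y ∈ A.erase x, (X - C (v y)) :=
    (Finset.mul_prod_erase A _ hx).symm
  have hQdeg : (∏ y ∈ A.erase x, (X - C (v y))).natDegree ≤ A.card - 1 := by
    refine le_trans (natDegree_prod_le _ _) ?_
    calc ∑ y ∈ A.erase x, (X - C (v y)).natDegree ≤ ∑ y ∈ A.erase x, 1 := by
          refine Finset.sum_le_sum fun y _ => ?_
          exact le_of_eq (natDegree_X_sub_C _)
      _ = (A.erase x).card := by simp
      _ = A.card - 1 := by rw [Finset.card_erase_of_mem hx]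
  intro t
  induction t with
  | zero =>
    intro d hd
    simp only [Nat.add_zero] at hd
    rw [Finset.Ioc_eq_empty (by omega), Finset.sum_empty]
    apply coeff_eq_zero_of_natDegree_lt
    have hA1 : 1 ≤ A.card := Finset.card_pos.mpr ⟨x, hx⟩
    omega
  | succ t ih =>
    intro d hd
    by_cases hdn : A.card ≤ d + t
    · exact ih d hdn
    · have hdlt : d < A.card := by omega
      have hrec : (∏ y ∈ A.erase x, (X - C (v y))).coeff d
          = (∏ y ∈ A, (X - C (v y))).coeff (d+1)
            + v x * (∏ y ∈ A.erase x, (X - C (v y))).coeff (d+1) := by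
        rw [hB]
        rw [sub_mul, coeff_sub, coeff_X_mul, coeff_C_mul]
        ring
      rw [hrec, ih (d+1) (by omega)]
      have hins : Finset.Ioc d A.card = insert (d+1) (Finset.Ioc (d+1) A.card) := by
        ext p; simp only [Finset.mem_Ioc, Finset.mem_insert]; omega
      rw [hins, Finset.sum_insert (by simp), Finset.mul_sum]
      have : ∀ p ∈ Finset.Ioc (d+1) A.card,
          v x * ((∏ y ∈ A, (X - C (v y))).coeff p * v x ^ (p - 1 - (d+1)))
          = (∏ y ∈ A, (X - C (v y))).coeff p * v x ^ (p - 1 - d) := by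
        intro p hp
        simp only [Finset.mem_Ioc] at hp
        have : p - 1 - d = (p - 1 - (d+1)) + 1 := by omega
        rw [this, pow_succ]
        ring
      rw [Finset.sum_congr rfl this]
      simp

lemma coeff_combo (A : Finset ι) (v c : ι → F) (k d : ℕ)
    (h : ∀ j < k, ∑ x ∈ A, c x * v x ^ j = 0) (hd : A.card ≤ d + k) :
    (∑ x ∈ A, C (c x) * ∏ y ∈ A.erase x, (X - C (v y))).coeff d = 0 := by
  rw [finset_sum_coeff]
  have : ∀ x ∈ A, (C (c x) * ∏ y ∈ A.erase x, (X - C (v y))).coeff d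
      = ∑ p ∈ Finset.Ioc d A.card,
          c x * ((∏ y ∈ A, (X - C (v y))).coeff p * v x ^ (p - 1 - d)) := by
    intro x hx
    rw [coeff_C_mul, coeff_prod_erase A v hx k d hd, Finset.mul_sum]
  rw [Finset.sum_congr rfl this, Finset.sum_comm]
  refine Finset.sum_eq_zero fun p hp => ?_
  simp only [Finset.mem_Ioc] at hp
  have : ∀ x ∈ A, c x * ((∏ y ∈ A, (X - C (v y))).coeff p * v x ^ (p - 1 - d))
      = (∏ y ∈ A, (X - C (v y))).coeff p * (c x * v x ^ (p - 1 - d)) := by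
    intro x _; ring
  rw [Finset.sum_congr rfl this, ← Finset.mul_sum, h (p - 1 - d) (by omega), mul_zero]

lemma eval_combo (A : Finset ι) (v c : ι → F) {z : ι} (hz : z ∈ A) :
    (∑ x ∈ A, C (c x) * ∏ y ∈ A.erase x, (X - C (v y))).eval (v z)
      = c z * ∏ y ∈ A.erase z, (v z - v y) := by
  rw [eval_finset_sum]
  rw [Finset.sum_eq_single_of_mem z hz]
  · simp [eval_prod]
  · intro x hx hxz
    have hzx : z ∈ A.erase x := Finset.mem_erase.mpr ⟨fun h => hxz h.symm, hz⟩
    simp only [eval_mul, eval_C, eval_prod, eval_sub, eval_X]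
    rw [Finset.prod_eq_zero hzx (by ring)]
    ring

lemma zero_forcing (A : Finset ι) (v c : ι → F) (k : ℕ) (hcard : A.card ≤ k)
    (h : ∀ j < k, ∑ x ∈ A, c x * v x ^ j = 0)
    (hdist : ∀ y ∈ A, ∀ z ∈ A, y ≠ z → v y ≠ v z) :
    ∀ z ∈ A, c z = 0 := by
  intro z hz
  have hg : (∑ x ∈ A, C (c x) * ∏ y ∈ A.erase x, (X - C (v y))) = 0 := by
    ext d
    rw [coeff_zero]
    exact coeff_combo A v c k d h (by omega)
  have := eval_combo A v c hz
  rw [hg] at this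
  simp only [eval_zero] at this
  have hne : ∏ y ∈ A.erase z, (v z - v y) ≠ 0 := by
    refine Finset.prod_ne_zero_iff.mpr fun y hy => ?_
    have hy' := Finset.mem_erase.mp hy
    exact sub_ne_zero_of_ne (hdist z hz y hy'.2 (fun h => hy'.1 h.symm))
  exact (mul_eq_zero.mp this.symm).resolve_right hne

section Key

variable [DecidableEq F] {t' r m ar : ℕ}

lemma block_sum {M : Type*} [AddCommMonoid M] (i : Fin t') (f : (Fin t' × (Fin r ⊕ Fin m)) → M) :
    ∑ q ∈ Finset.univ.filter (fun q => q.1 = i), f q = ∑ x : Fin r ⊕ Fin m, f (i, x) := by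
  rw [Finset.sum_filter, Fintype.sum_prod_type]
  rw [Finset.sum_eq_single_of_mem i (Finset.mem_univ i)
    (fun i' _ hne => Finset.sum_eq_zero fun x _ => if_neg (by simpa using hne))]
  exact Finset.sum_congr rfl fun x _ => if_pos rfl

lemma key (hm : 1 ≤ m)
    (val : (Fin t' × Fin r) ⊕ Fin m → F) (hval : Function.Injective val)
    (loc : Fin t' × (Fin r ⊕ Fin m) → F)
    (hloc : ∀ p, loc p = Sum.elim (fun j => val (Sum.inl (p.1, j))) (fun u => val (Sum.inr u)) p.2)
    (c : Fin t' × (Fin r ⊕ Fin m) → F)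
    (htop : ∀ (i : Fin t') (j : ℕ), j < m →
      ∑ x : Fin r ⊕ Fin m, c (i, x) * loc (i, x) ^ j = 0)
    (hbot : ∀ w : ℕ, w < ar →
      ∑ p : Fin t' × (Fin r ⊕ Fin m), c p * loc p ^ (m + w) = 0)
    (hcard : (Finset.univ.filter fun p => c p ≠ 0).card ≤ ar + m) :
    c = 0 := by
  have hlocl : ∀ (i : Fin t') (j : Fin r), loc (i, Sum.inl j) = val (Sum.inl (i, j)) := by
    intro i j; rw [hloc]; rfl
  have hlocr : ∀ (i : Fin t') (u : Fin m), loc (i, Sum.inr u) = val (Sum.inr u) := by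
    intro i u; rw [hloc]; rfl
  set A : Finset (Fin t' × (Fin r ⊕ Fin m)) := Finset.univ.filter fun p => c p ≠ 0 with hA
  have huniv : ∀ e, e < m + ar → ∑ p : Fin t' × (Fin r ⊕ Fin m), c p * loc p ^ e = 0 := by
    intro e he
    rcases lt_or_ge e m with h | h
    · rw [Fintype.sum_prod_type]
      exact Finset.sum_eq_zero fun i _ => htop i e h
    · have := hbot (e - m) (by omega)
      rwa [show m + (e - m) = e by omega] at this
  have huniA : ∀ e, e < m + ar → ∑ p ∈ A, c p * loc p ^ e = 0 := by
    intro e he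
    rw [Finset.sum_subset (Finset.subset_univ A) (fun p _ hp => by
      have : c p = 0 := by simpa [hA] using hp
      rw [this, zero_mul])]
    exact huniv e he
  -- the polynomial W with roots the shared γ's
  set W : F[X] := ∏ u : Fin m, (X - C (val (Sum.inr u))) with hWdef
  have hWmonic : W.Monic := monic_prod_of_monic _ _ fun u _ => monic_X_sub_C _
  have hWdeg : W.natDegree = m := by
    rw [hWdef, natDegree_prod _ _ fun u _ => X_sub_C_ne_zero _]
    simp [natDegree_X_sub_C]
  have heval0 : ∀ (P : F[X]) (e : ℕ), P.natDegree + e < m + ar →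
      ∑ p ∈ A, c p * (P.eval (loc p) * loc p ^ e) = 0 := by
    intro P e hPe
    have hterm : ∀ p ∈ A, c p * (P.eval (loc p) * loc p ^ e)
        = ∑ q ∈ Finset.range (P.natDegree + 1), P.coeff q * (c p * loc p ^ (q + e)) := by
      intro p _
      rw [eval_eq_sum_range, Finset.sum_mul, Finset.mul_sum]
      refine Finset.sum_congr rfl fun q _ => ?_
      rw [pow_add]; ring
    rw [Finset.sum_congr rfl hterm, Finset.sum_comm]
    refine Finset.sum_eq_zero fun q hq => ?_
    rw [← Finset.mul_sum, huniA (q + e) (by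
      simp only [Finset.mem_range] at hq; omega), mul_zero]
  set c' : Fin t' × (Fin r ⊕ Fin m) → F := fun p => c p * W.eval (loc p) with hc'
  have hWsum : ∀ j, j < ar → ∑ p ∈ A, c' p * loc p ^ j = 0 := by
    intro j hj
    have h1 := heval0 W j (by rw [hWdeg]; omega)
    rw [← h1]
    exact Finset.sum_congr rfl fun p _ => by rw [hc']; ring
  set M : F[X] := ∑ p ∈ A, C (c' p) * ∏ y ∈ A.erase p, (X - C (loc y)) with hM
  have hMcoeff : ∀ d, m ≤ d → M.coeff d = 0 := by
    intro d hd
    exact coeff_combo A loc c' ar d hWsum (by omega)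
  have hMroot : ∀ u : Fin m, M.eval (val (Sum.inr u)) = 0 := by
    intro u
    set γ := val (Sum.inr u) with hγ
    set Wu : F[X] := ∏ u' ∈ Finset.univ.erase u, (X - C (val (Sum.inr u'))) with hWu
    have hWsplit : W = (X - C γ) * Wu := (Finset.mul_prod_erase _ _ (Finset.mem_univ u)).symm
    have hWudeg : Wu.natDegree ≤ m - 1 := by
      refine le_trans (natDegree_prod_le _ _) ?_
      calc ∑ u' ∈ Finset.univ.erase u, (X - C (val (Sum.inr u'))).natDegree
          ≤ ∑ _u' ∈ Finset.univ.erase u, (1 : ℕ) := by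
            refine Finset.sum_le_sum fun y _ => ?_
            exact le_of_eq (natDegree_X_sub_C _)
        _ = (Finset.univ.erase u).card := by simp
        _ = m - 1 := by rw [Finset.card_erase_of_mem (Finset.mem_univ u)]; simp
    have hterm : ∀ p ∈ A, c' p * ∏ y ∈ A.erase p, (γ - loc y)
        = (-(∏ y ∈ A, (γ - loc y))) * (c p * (Wu.eval (loc p) * loc p ^ 0)) := by
      intro p hp
      have h1 : W.eval (loc p) = (loc p - γ) * Wu.eval (loc p) := by
        rw [hWsplit, eval_mul, eval_sub, eval_X, eval_C]
      have h2 : (∏ y ∈ A.erase p, (γ - loc y)) * (γ - loc p) = ∏ y ∈ A, (γ - loc y) :=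
        Finset.prod_erase_mul A _ hp
      have hc'p : c' p = c p * W.eval (loc p) := by simp only [hc']
      rw [hc'p, h1, pow_zero]
      calc c p * ((loc p - γ) * Wu.eval (loc p)) * ∏ y ∈ A.erase p, (γ - loc y)
          = -(c p * Wu.eval (loc p) * ((∏ y ∈ A.erase p, (γ - loc y)) * (γ - loc p))) := by ring
        _ = (-(∏ y ∈ A, (γ - loc y))) * (c p * (Wu.eval (loc p) * 1)) := by rw [h2]; ring
    have hMeval : M.eval γ = ∑ p ∈ A, c' p * ∏ y ∈ A.erase p, (γ - loc y) := by
      rw [hM, eval_finset_sum]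
      refine Finset.sum_congr rfl fun p _ => ?_
      rw [eval_mul, eval_C, eval_prod]
      simp
    rw [hMeval, Finset.sum_congr rfl hterm, ← Finset.mul_sum,
      heval0 Wu 0 (by omega), mul_zero]
  have hM0 : M = 0 := by
    have hinj : Function.Injective (fun u : Fin m => val (Sum.inr u)) := by
      intro u u' h
      exact Sum.inr_injective (hval h)
    have hdvd : W ∣ M := by
      rw [hWdef]
      refine Finset.prod_dvd_of_coprime
        ((Polynomial.pairwise_coprime_X_sub_C hinj).set_pairwise _) fun u _ => ?_
      exact dvd_iff_isRoot.mpr (hMroot u)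
    obtain ⟨q, hq⟩ := hdvd
    by_cases hq0 : q = 0
    · rw [hq, hq0, mul_zero]
    · exfalso
      have hMne : M ≠ 0 := by rw [hq]; exact mul_ne_zero hWmonic.ne_zero hq0
      have hdeg : m ≤ M.natDegree := by
        rw [hq, natDegree_mul hWmonic.ne_zero hq0, hWdeg]; omega
      exact hMne (leadingCoeff_eq_zero.mp (hMcoeff _ hdeg))
  -- no non-γ position is in the support
  have hnoP : ∀ (i : Fin t') (j : Fin r), (i, Sum.inl j) ∉ A := by
    intro i j hmem
    have heval := eval_combo A loc c' hmem
    rw [← hM, hM0, eval_zero] at heval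
    have h1 : c (i, Sum.inl j) ≠ 0 := by
      have := (Finset.mem_filter.mp hmem).2
      exact this
    have h2 : W.eval (loc (i, Sum.inl j)) ≠ 0 := by
      rw [hWdef, eval_prod]
      refine Finset.prod_ne_zero_iff.mpr fun u _ => ?_
      rw [eval_sub, eval_X, eval_C, hlocl]
      exact sub_ne_zero_of_ne (fun h => by simpa using hval h)
    have h3 : ∏ y ∈ A.erase (i, Sum.inl j), (loc (i, Sum.inl j) - loc y) ≠ 0 := by
      refine Finset.prod_ne_zero_iff.mpr fun y hy => ?_
      have hy' := Finset.mem_erase.mp hy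
      refine sub_ne_zero_of_ne ?_
      obtain ⟨i2, x2⟩ := y
      match x2 with
      | Sum.inl j2 =>
        intro h
        rw [hlocl, hlocl] at h
        have := hval h
        simp only [Sum.inl.injEq, Prod.mk.injEq] at this
        exact hy'.1 (by simp [this.1, this.2])
      | Sum.inr u2 =>
        intro h
        rw [hlocl, hlocr] at h
        simpa using hval h
    have hc'p : c' (i, Sum.inl j) = c (i, Sum.inl j) * W.eval (loc (i, Sum.inl j)) := by
      simp only [hc']
    rw [hc'p] at heval
    exact (mul_ne_zero (mul_ne_zero h1 h2) h3) heval.symm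
  -- conclude c = 0
  funext p
  by_contra hp
  simp only [Pi.zero_apply] at hp
  have hpA : p ∈ A := Finset.mem_filter.mpr ⟨Finset.mem_univ _, hp⟩
  obtain ⟨i, x⟩ := p
  match x with
  | Sum.inl j => exact hnoP i j hpA
  | Sum.inr u =>
    set Ai : Finset (Fin t' × (Fin r ⊕ Fin m)) := A.filter (fun q => q.1 = i) with hAi
    have hAiP : ∀ q ∈ Ai, ∃ u' : Fin m, q = (i, Sum.inr u') := by
      intro q hq
      obtain ⟨hqA, hqi⟩ := Finset.mem_filter.mp hq
      obtain ⟨i2, x2⟩ := q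
      simp only at hqi
      subst hqi
      match x2 with
      | Sum.inl j2 => exact absurd hqA (hnoP _ j2)
      | Sum.inr u2 => exact ⟨u2, rfl⟩
    have hAicard : Ai.card ≤ m := by
      have hsub : Ai ⊆ Finset.univ.image (fun u' : Fin m => ((i, Sum.inr u') :
          Fin t' × (Fin r ⊕ Fin m))) := by
        intro q hq
        obtain ⟨u', rfl⟩ := hAiP q hq
        exact Finset.mem_image.mpr ⟨u', Finset.mem_univ _, rfl⟩
      calc Ai.card ≤ _ := Finset.card_le_card hsub
        _ ≤ (Finset.univ : Finset (Fin m)).card := Finset.card_image_le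
        _ = m := by simp
    have hAisum : ∀ j, j < m → ∑ q ∈ Ai, c q * loc q ^ j = 0 := by
      intro j hj
      have h1 := htop i j hj
      rw [← block_sum i (fun q => c q * loc q ^ j)] at h1
      rw [← h1]
      refine Finset.sum_subset ?_ ?_
      · intro q hq
        obtain ⟨_, hqi⟩ := Finset.mem_filter.mp hq
        exact Finset.mem_filter.mpr ⟨Finset.mem_univ _, hqi⟩
      · intro q hq hqn
        have hq1 : q.1 = i := (Finset.mem_filter.mp hq).2
        have : c q = 0 := by
          by_contra hc0
          exact hqn (Finset.mem_filter.mpr ⟨Finset.mem_filter.mpr ⟨Finset.mem_univ _, hc0⟩, hq1⟩)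
        rw [this, zero_mul]
    have hdisti : ∀ y ∈ Ai, ∀ z ∈ Ai, y ≠ z → loc y ≠ loc z := by
      intro y hy z hz hyz
      obtain ⟨u1, rfl⟩ := hAiP y hy
      obtain ⟨u2, rfl⟩ := hAiP z hz
      rw [hlocr, hlocr]
      intro h
      have := hval h
      simp only [Sum.inr.injEq] at this
      exact hyz (by rw [this])
    have := zero_forcing Ai loc c m hAicard hAisum hdisti (i, Sum.inr u)
      (Finset.mem_filter.mpr ⟨hpA, rfl⟩)
    exact hp this

end Key


end Aux

/-- The final code of Section VI: with `r = s·k_I + a`, distinct locators `val` (the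
`α`'s and `β`'s, indexed by `Fin t' × Fin r`, together with the shared `γ`'s, indexed by
`Fin (δ-1)`), the parity-check matrix `H^F` consists of `t'` block-diagonal
`(δ-1)`-row Vandermonde blocks `A_i` together with a bottom block row `(B_1|…|B_{t'})`
formed by rows `δ-1, …, at'+δ-2` of the Vandermonde matrices on the same locators.
The resulting code is an optimal `(r,δ)`-LRC of length `n_F = t'(r+δ-1)`, dimension
`k_F = s·t'·k_I` and minimum distance `d_F = a·t' + δ`, meeting the Singleton-type bound
`d_F = n_F - k_F + 1 - (⌈k_F/r⌉ - 1)(δ-1)`. -/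
theorem stmt12 {F : Type*} [Field F] [Fintype F] [DecidableEq F]
    (s a δ t' kI : ℕ) (hs : 2 ≤ s) (ha : 1 ≤ a) (hδ : 2 ≤ δ) (ht : 1 ≤ t')
    (hkI : 1 ≤ kI) (hadk : a * t' + δ ≤ kI)
    (hq : t' * (s * kI + a) + δ - 1 ≤ Fintype.card F)
    (val : (Fin t' × Fin (s * kI + a)) ⊕ Fin (δ - 1) → F)
    (hval : Function.Injective val) :
    let loc : Fin t' × (Fin (s * kI + a) ⊕ Fin (δ - 1)) → F := fun c =>
      Sum.elim (fun j => val (Sum.inl (c.1, j))) (fun u => val (Sum.inr u)) c.2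
    let H : Matrix ((Fin t' × Fin (δ - 1)) ⊕ Fin (a * t'))
        (Fin t' × (Fin (s * kI + a) ⊕ Fin (δ - 1))) F := fun ri ci =>
      Sum.elim
        (fun p => if p.1 = ci.1 then loc ci ^ (p.2 : ℕ) else 0)
        (fun w => loc ci ^ (δ - 1 + (w : ℕ)))
        ri
    let C := LinearMap.ker H.mulVecLin
    Module.finrank F C = s * t' * kI ∧
    IsMinDist C (a * t' + δ) ∧
    HasLocality C (s * kI + a) δ ∧
    (a * t' + δ : ℤ) = (t' * (s * kI + a + δ - 1) : ℤ) - (s * t' * kI : ℤ) + 1 -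
      (⌈(s * t' * kI : ℚ) / ((s * kI + a : ℕ) : ℚ)⌉ - 1) * ((δ : ℤ) - 1) := by
  intro loc H C
  have hm1 : 1 ≤ δ - 1 := by omega
  -- extraction of the parity-check equations
  have hrow : ∀ c, c ∈ C → ∀ ri, ∑ p : Fin t' × (Fin (s * kI + a) ⊕ Fin (δ - 1)),
      H ri p * c p = 0 := by
    intro c hc ri
    have h1 : H.mulVec c = 0 := by
      have := (LinearMap.mem_ker).mp hc
      rwa [Matrix.mulVecLin_apply] at this
    have := congrFun h1 ri
    simpa [Matrix.mulVec, dotProduct] using this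
  have hHl : ∀ (i : Fin t') (j : Fin (δ - 1)) ci,
      H (Sum.inl (i, j)) ci = if i = ci.1 then loc ci ^ (j : ℕ) else 0 := fun _ _ _ => rfl
  have hHr : ∀ (w : Fin (a * t')) ci,
      H (Sum.inr w) ci = loc ci ^ (δ - 1 + (w : ℕ)) := fun _ _ => rfl
  have htop : ∀ c, c ∈ C → ∀ (i : Fin t') (j : ℕ), j < δ - 1 →
      ∑ x : Fin (s * kI + a) ⊕ Fin (δ - 1), c (i, x) * loc (i, x) ^ j = 0 := by
    intro c hc i j hj
    have h1 := hrow c hc (Sum.inl (i, ⟨j, hj⟩))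
    rw [Fintype.sum_prod_type] at h1
    rw [← h1]
    rw [Finset.sum_eq_single_of_mem i (Finset.mem_univ i)]
    · refine (Finset.sum_congr rfl fun x _ => ?_).symm
      rw [hHl, if_pos rfl]
      ring
    · intro i' _ hne
      refine Finset.sum_eq_zero fun x _ => ?_
      rw [hHl, if_neg (by simpa using hne.symm), zero_mul]
  have hbot : ∀ c, c ∈ C → ∀ w : ℕ, w < a * t' →
      ∑ p : Fin t' × (Fin (s * kI + a) ⊕ Fin (δ - 1)), c p * loc p ^ (δ - 1 + w) = 0 := by
    intro c hc w hw
    have h1 := hrow c hc (Sum.inr ⟨w, hw⟩)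
    rw [← h1]
    refine (Finset.sum_congr rfl fun p _ => ?_).symm
    rw [hHr]
    ring
  have hlocl : ∀ (i : Fin t') (j : Fin (s * kI + a)),
      loc (i, Sum.inl j) = val (Sum.inl (i, j)) := fun _ _ => rfl
  have hlocr : ∀ (i : Fin t') (u : Fin (δ - 1)),
      loc (i, Sum.inr u) = val (Sum.inr u) := fun _ _ => rfl
  have hdistblock : ∀ (y z : Fin t' × (Fin (s * kI + a) ⊕ Fin (δ - 1))), y.1 = z.1 →
      y ≠ z → loc y ≠ loc z := by
    rintro ⟨i1, x1⟩ ⟨i2, x2⟩ h hne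
    simp only at h
    subst h
    match x1, x2 with
    | Sum.inl j1, Sum.inl j2 =>
      rw [hlocl, hlocl]
      intro he
      have := hval he
      simp only [Sum.inl.injEq, Prod.mk.injEq] at this
      exact hne (by rw [this.2])
    | Sum.inl j1, Sum.inr u2 =>
      rw [hlocl, hlocr]
      intro he
      simpa using hval he
    | Sum.inr u1, Sum.inl j2 =>
      rw [hlocr, hlocl]
      intro he
      simpa using hval he
    | Sum.inr u1, Sum.inr u2 =>
      rw [hlocr, hlocr]
      intro he
      have := hval he
      simp only [Sum.inr.injEq] at this
      exact hne (by rw [this])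
  have hnormeq : ∀ c : Fin t' × (Fin (s * kI + a) ⊕ Fin (δ - 1)) → F,
      hammingNorm c = (Finset.univ.filter fun p => c p ≠ 0).card := fun _ => rfl
  refine ⟨?_, ⟨?_, ?_⟩, ?_, ?_⟩
  · -- dimension
    have hkIs : kI ≤ s * kI := Nat.le_mul_of_pos_left kI (by omega)
    have hinj : Function.Injective (Hᵀ.mulVecLin) := by
      rw [← LinearMap.ker_eq_bot]
      refine (Submodule.eq_bot_iff _).mpr fun lam hlam => ?_
      have hcol : ∀ pcol : Fin t' × (Fin (s * kI + a) ⊕ Fin (δ - 1)),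
          ∑ ri, H ri pcol * lam ri = 0 := by
        intro pcol
        have h1 : Hᵀ.mulVec lam = 0 := by
          have := LinearMap.mem_ker.mp hlam
          rwa [Matrix.mulVecLin_apply] at this
        have := congrFun h1 pcol
        simpa [Matrix.mulVec, dotProduct, Matrix.transpose_apply] using this
      have hQ : ∀ i : Fin t',
          ((∑ j : Fin (δ - 1), Polynomial.C (lam (Sum.inl (i, j))) * X ^ (j : ℕ))
            + ∑ w : Fin (a * t'), Polynomial.C (lam (Sum.inr w)) * X ^ ((δ - 1) + (w : ℕ))) = 0 := by
        intro i
        set Q : F[X] := (∑ j : Fin (δ - 1), Polynomial.C (lam (Sum.inl (i, j))) * X ^ (j : ℕ))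
            + ∑ w : Fin (a * t'), Polynomial.C (lam (Sum.inr w)) * X ^ ((δ - 1) + (w : ℕ)) with hQdef
        have heval : ∀ x : Fin (s * kI + a) ⊕ Fin (δ - 1), Q.eval (loc (i, x)) = 0 := by
          intro x
          have h2 := hcol (i, x)
          rw [Fintype.sum_sum_type, Fintype.sum_prod_type] at h2
          have e1 : ∑ i' : Fin t', ∑ j : Fin (δ - 1),
              H (Sum.inl (i', j)) (i, x) * lam (Sum.inl (i', j))
              = ∑ j : Fin (δ - 1), lam (Sum.inl (i, j)) * loc (i, x) ^ (j : ℕ) := by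
            rw [Finset.sum_eq_single_of_mem i (Finset.mem_univ i)]
            · refine Finset.sum_congr rfl fun j _ => ?_
              rw [hHl, if_pos rfl]; ring
            · intro i' _ hne
              refine Finset.sum_eq_zero fun j _ => ?_
              rw [hHl, if_neg (by simpa using hne), zero_mul]
          have e2 : ∑ w : Fin (a * t'), H (Sum.inr w) (i, x) * lam (Sum.inr w)
              = ∑ w : Fin (a * t'), lam (Sum.inr w) * loc (i, x) ^ ((δ - 1) + (w : ℕ)) := by
            refine Finset.sum_congr rfl fun w _ => ?_
            rw [hHr]; ring
          rw [e1, e2] at h2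
          rw [hQdef, eval_add, eval_finset_sum, eval_finset_sum]
          simpa using h2
        have hdeg : Q.natDegree < Fintype.card (Fin (s * kI + a) ⊕ Fin (δ - 1)) := by
          have hb1 : (∑ j : Fin (δ - 1), Polynomial.C (lam (Sum.inl (i, j))) * X ^ (j : ℕ)).natDegree
              ≤ (δ - 1) + a * t' := by
            refine Polynomial.natDegree_sum_le_of_forall_le _ _ fun j _ => ?_
            refine le_trans (natDegree_C_mul_le _ _) ?_
            rw [natDegree_X_pow]
            omega
          have hb2 : (∑ w : Fin (a * t'),
              Polynomial.C (lam (Sum.inr w)) * X ^ ((δ - 1) + (w : ℕ))).natDegree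
              ≤ (δ - 1) + a * t' := by
            refine Polynomial.natDegree_sum_le_of_forall_le _ _ fun w _ => ?_
            refine le_trans (natDegree_C_mul_le _ _) ?_
            rw [natDegree_X_pow]
            omega
          rw [hQdef]
          refine lt_of_le_of_lt (le_trans (natDegree_add_le _ _) (max_le hb1 hb2)) ?_
          simp only [Fintype.card_sum, Fintype.card_fin]
          omega
        have hfinj : Function.Injective (fun x : Fin (s * kI + a) ⊕ Fin (δ - 1) =>
            loc (i, x)) := by
          intro x y h
          by_contra hne
          exact hdistblock (i, x) (i, y) rfl (by simp [hne]) h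
        exact Polynomial.eq_zero_of_natDegree_lt_card_of_eval_eq_zero Q hfinj heval hdeg
      have hco1 : ∀ (i : Fin t') (j : Fin (δ - 1)), lam (Sum.inl (i, j)) = 0 := by
        intro i j
        have h3 := congrArg (fun P => Polynomial.coeff P (j : ℕ)) (hQ i)
        simp only [coeff_add, finset_sum_coeff, coeff_C_mul, coeff_X_pow, coeff_zero] at h3
        rw [Finset.sum_eq_single_of_mem j (Finset.mem_univ j)
          (fun j' _ hne => by
            rw [if_neg (fun h => hne (Fin.val_injective h.symm)), mul_zero])] at h3
        rw [if_pos rfl, mul_one] at h3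
        rw [Finset.sum_eq_zero (fun w _ => by
          rw [if_neg (by omega), mul_zero])] at h3
        simpa using h3
      have hco2 : ∀ w : Fin (a * t'), lam (Sum.inr w) = 0 := by
        intro w
        have h3 := congrArg (fun P => Polynomial.coeff P ((δ - 1) + (w : ℕ))) (hQ ⟨0, ht⟩)
        simp only [coeff_add, finset_sum_coeff, coeff_C_mul, coeff_X_pow, coeff_zero] at h3
        rw [Finset.sum_eq_zero (fun j _ => by
          rw [if_neg (by omega), mul_zero])] at h3
        rw [Finset.sum_eq_single_of_mem w (Finset.mem_univ w)
          (fun w' _ hne => by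
            rw [if_neg (fun h => hne (Fin.val_injective (by omega))), mul_zero])] at h3
        rw [if_pos rfl, mul_one] at h3
        simpa using h3
      funext ri
      rw [Pi.zero_apply]
      match ri with
      | Sum.inl (i, j) => exact hco1 i j
      | Sum.inr w => exact hco2 w
    have hrankT : H.rank = t' * (δ - 1) + a * t' := by
      rw [← Matrix.rank_transpose]
      have h1 : Hᵀ.rank = Module.finrank F (LinearMap.range Hᵀ.mulVecLin) := rfl
      rw [h1, LinearMap.finrank_range_of_inj hinj, Module.finrank_fintype_fun_eq_card]
      simp [Fintype.card_sum, Fintype.card_prod]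
    have hrn := LinearMap.finrank_range_add_finrank_ker H.mulVecLin
    have hdom : Module.finrank F ((Fin t' × (Fin (s * kI + a) ⊕ Fin (δ - 1))) → F)
        = t' * ((s * kI + a) + (δ - 1)) := by
      rw [Module.finrank_fintype_fun_eq_card]
      simp
    have hrange : Module.finrank F (LinearMap.range H.mulVecLin)
        = t' * (δ - 1) + a * t' := hrankT
    rw [hdom, hrange] at hrn
    have harith : t' * ((s * kI + a) + (δ - 1)) = (t' * (δ - 1) + a * t') + s * t' * kI := by
      ring
    rw [harith] at hrn
    exact Nat.add_left_cancel hrn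
  · -- min distance lower bound
    intro c hc hc0
    by_contra hlt
    push_neg at hlt
    have hcard : (Finset.univ.filter fun p => c p ≠ 0).card ≤ a * t' + (δ - 1) := by
      rw [← hnormeq c]; omega
    exact hc0 (key hm1 val hval loc (fun p => rfl) c (htop c hc) (hbot c hc) hcard)
  · -- existence of min weight codeword
    have hrge : a * t' + δ ≤ s * kI + a := by
      have h1 : kI ≤ s * kI := Nat.le_mul_of_pos_left kI (by omega)
      omega
    set i0 : Fin t' := ⟨0, ht⟩ with hi0
    set pos : Fin (a * t' + δ) → Fin t' × (Fin (s * kI + a) ⊕ Fin (δ - 1)) :=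
      fun q => (i0, Sum.inl (Fin.castLE hrge q)) with hpos
    have hposinj : Function.Injective pos := by
      intro q q' h
      simp only [hpos, Prod.mk.injEq, Sum.inl.injEq] at h
      exact Fin.castLE_injective hrge h.2
    set pts : Fin (a * t' + δ) → F := fun q => loc (pos q) with hpts
    have hptsinj : Function.Injective pts := by
      intro q q' h
      apply hposinj
      by_contra hne
      exact hdistblock (pos q) (pos q') rfl hne h
    set Nmat : Matrix (Fin (a * t' + (δ - 1))) (Fin (a * t' + δ)) F :=
      fun e q => pts q ^ (e : ℕ) with hNmat
    have hker : ∃ c0 : Fin (a * t' + δ) → F, c0 ≠ 0 ∧ Nmat.mulVec c0 = 0 := by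
      by_contra hcon
      push_neg at hcon
      have hinj : Function.Injective Nmat.mulVecLin := by
        rw [← LinearMap.ker_eq_bot]
        refine (Submodule.eq_bot_iff _).mpr fun c0 hc0 => ?_
        by_contra h0
        refine hcon c0 h0 ?_
        have := LinearMap.mem_ker.mp hc0
        rwa [Matrix.mulVecLin_apply] at this
      have hle := LinearMap.finrank_le_finrank_of_injective hinj
      rw [Module.finrank_fintype_fun_eq_card, Module.finrank_fintype_fun_eq_card] at hle
      simp only [Fintype.card_fin] at hle
      omega
    obtain ⟨c0, hc0ne, hc0vec⟩ := hker
    have hc0sum : ∀ e, e < a * t' + (δ - 1) → ∑ q, c0 q * pts q ^ e = 0 := by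
      intro e he
      have := congrFun hc0vec ⟨e, he⟩
      simp only [Matrix.mulVec, dotProduct, Pi.zero_apply] at this
      rw [← this]
      refine Finset.sum_congr rfl fun q _ => ?_
      rw [hNmat]
      ring
    have hfull : ∀ q, c0 q ≠ 0 := by
      intro q0 hq0
      have hAsub : (Finset.univ.filter fun q => c0 q ≠ 0) ⊆ Finset.univ.erase q0 := by
        intro q hq
        have := (Finset.mem_filter.mp hq).2
        exact Finset.mem_erase.mpr ⟨fun h => this (h ▸ hq0), Finset.mem_univ _⟩
      have hcard : (Finset.univ.filter fun q => c0 q ≠ 0).card ≤ a * t' + (δ - 1) := by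
        calc (Finset.univ.filter fun q => c0 q ≠ 0).card
            ≤ (Finset.univ.erase q0).card := Finset.card_le_card hAsub
          _ = a * t' + δ - 1 := by
              rw [Finset.card_erase_of_mem (Finset.mem_univ _)]
              simp
          _ ≤ a * t' + (δ - 1) := by omega
      have hsum : ∀ e, e < a * t' + (δ - 1) →
          ∑ q ∈ (Finset.univ.filter fun q => c0 q ≠ 0), c0 q * pts q ^ e = 0 := by
        intro e he
        rw [Finset.sum_subset (Finset.subset_univ _) (fun q _ hq => by
          have : c0 q = 0 := by
            by_contra h0
            exact hq (Finset.mem_filter.mpr ⟨Finset.mem_univ _, h0⟩)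
          rw [this, zero_mul])]
        exact hc0sum e he
      have hzero := zero_forcing _ pts c0 (a * t' + (δ - 1)) hcard hsum
        (fun y _ z _ hyz => fun h => hyz (hptsinj h))
      apply hc0ne
      funext q
      rw [Pi.zero_apply]
      by_cases hq : c0 q = 0
      · exact hq
      · exact hzero q (Finset.mem_filter.mpr ⟨Finset.mem_univ _, hq⟩)
    set cw : (Fin t' × (Fin (s * kI + a) ⊕ Fin (δ - 1))) → F :=
      fun p => ∑ q : Fin (a * t' + δ), if p = pos q then c0 q else 0 with hcw
    have hcwpos : ∀ q, cw (pos q) = c0 q := by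
      intro q
      show (∑ q' : Fin (a * t' + δ), if pos q = pos q' then c0 q' else 0) = c0 q
      rw [Finset.sum_eq_single_of_mem q (Finset.mem_univ q)
        (fun q' _ hne => if_neg (fun h => hne (hposinj h).symm))]
      exact if_pos rfl
    have hcwoff : ∀ p, (∀ q, p ≠ pos q) → cw p = 0 := by
      intro p hp
      show (∑ q : Fin (a * t' + δ), if p = pos q then c0 q else 0) = 0
      exact Finset.sum_eq_zero fun q _ => if_neg (hp q)
    have hsum2 : ∀ ri, ∑ p, H ri p * cw p = ∑ q, H ri (pos q) * c0 q := by
      intro ri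
      have hterm : ∀ p, H ri p * cw p = ∑ q, if p = pos q then H ri p * c0 q else 0 := by
        intro p
        show H ri p * (∑ q : Fin (a * t' + δ), if p = pos q then c0 q else 0) = _
        rw [Finset.mul_sum]
        refine Finset.sum_congr rfl fun q _ => ?_
        rw [mul_ite, mul_zero]
      rw [Finset.sum_congr rfl (fun p _ => hterm p), Finset.sum_comm]
      refine Finset.sum_congr rfl fun q _ => ?_
      have : ∀ p, (if p = pos q then H ri p * c0 q else 0)
          = if p = pos q then H ri (pos q) * c0 q else 0 := by
        intro p
        by_cases h : p = pos q
        · rw [if_pos h, if_pos h, h]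
        · rw [if_neg h, if_neg h]
      rw [Finset.sum_congr rfl (fun p _ => this p), Finset.sum_ite_eq' Finset.univ (pos q)]
      rw [if_pos (Finset.mem_univ _)]
    have hmem : cw ∈ C := by
      apply LinearMap.mem_ker.mpr
      rw [Matrix.mulVecLin_apply]
      funext ri
      have h0 : H.mulVec cw ri = ∑ p, H ri p * cw p := by
        simp [Matrix.mulVec, dotProduct]
      rw [Pi.zero_apply, h0, hsum2 ri]
      match ri with
      | Sum.inl (i, j) =>
        by_cases hi : i = i0
        · subst hi
          have he : ∀ q, H (Sum.inl (i0, j)) (pos q) * c0 q = c0 q * pts q ^ (j : ℕ) := by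
            intro q
            have hcond : i0 = (pos q).1 := rfl
            rw [hHl, if_pos hcond]
            have hl : loc (pos q) = pts q := rfl
            rw [hl]
            ring
          rw [Finset.sum_congr rfl (fun q _ => he q)]
          exact hc0sum (j : ℕ) (by omega)
        · refine Finset.sum_eq_zero fun q _ => ?_
          rw [hHl, if_neg (fun h => hi h), zero_mul]
      | Sum.inr w =>
        have he : ∀ q, H (Sum.inr w) (pos q) * c0 q = c0 q * pts q ^ ((δ - 1) + (w : ℕ)) := by
          intro q
          rw [hHr]
          have hl : loc (pos q) = pts q := rfl
          rw [hl]
          ring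
        rw [Finset.sum_congr rfl (fun q _ => he q)]
        exact hc0sum ((δ - 1) + (w : ℕ)) (by omega)
    have hcwne : cw ≠ 0 := by
      intro h
      have h1 : cw (pos ⟨0, by omega⟩) = c0 ⟨0, by omega⟩ := hcwpos _
      rw [h, Pi.zero_apply] at h1
      exact hfull _ h1.symm
    have hnorm : hammingNorm cw = a * t' + δ := by
      have hfilter : (Finset.univ.filter fun p => cw p ≠ 0) = Finset.univ.image pos := by
        ext p
        simp only [Finset.mem_filter, Finset.mem_univ, true_and, Finset.mem_image]
        constructor
        · intro hp
          by_contra hno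
          push_neg at hno
          exact hp (hcwoff p (fun q h => hno q h.symm))
        · rintro ⟨q, _, rfl⟩
          rw [hcwpos]
          exact hfull q
      rw [hnormeq cw, hfilter, Finset.card_image_of_injective _ hposinj]
      simp
    exact ⟨cw, hmem, hcwne, hnorm⟩
  · -- locality
    intro p
    refine ⟨Finset.univ.filter (fun q => q.1 = p.1), by simp, ?_, ?_⟩
    · have hJ : (Finset.univ.filter
          (fun q : Fin t' × (Fin (s * kI + a) ⊕ Fin (δ - 1)) => q.1 = p.1)).card
          = (s * kI + a) + (δ - 1) := by
        rw [Finset.card_eq_sum_ones, block_sum p.1 (fun _ => (1 : ℕ))]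
        simp
      omega
    · rintro c hc ⟨j0, hj0J, hj0⟩
      by_contra hlt
      push_neg at hlt
      set A' := (Finset.univ.filter
        (fun q : Fin t' × (Fin (s * kI + a) ⊕ Fin (δ - 1)) => q.1 = p.1)).filter
        (fun q => c q ≠ 0) with hA'
      have hsum : ∀ j, j < δ - 1 → ∑ q ∈ A', c q * loc q ^ j = 0 := by
        intro j hj
        have h1 := htop c hc p.1 j hj
        rw [← block_sum p.1 (fun q => c q * loc q ^ j)] at h1
        rw [← h1]
        refine Finset.sum_subset (Finset.filter_subset _ _) fun q hq hqn => ?_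
        have : c q = 0 := by
          by_contra h0
          exact hqn (Finset.mem_filter.mpr ⟨hq, h0⟩)
        rw [this, zero_mul]
      have hdist : ∀ y ∈ A', ∀ z ∈ A', y ≠ z → loc y ≠ loc z := by
        intro y hy z hz hyz
        have hy1 : y.1 = p.1 := (Finset.mem_filter.mp ((Finset.filter_subset _ _) hy)).2
        have hz1 : z.1 = p.1 := (Finset.mem_filter.mp ((Finset.filter_subset _ _) hz)).2
        exact hdistblock y z (by rw [hy1, hz1]) hyz
      have hzero := zero_forcing A' loc c (δ - 1) (by omega) hsum hdist
      exact hj0 (hzero j0 (Finset.mem_filter.mpr ⟨hj0J, hj0⟩))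
  · -- Singleton bound arithmetic
    have h3 : a * t' + 1 ≤ kI := by omega
    have hd0 : 0 < s * kI + a := by
      have := Nat.mul_pos (show 0 < s by omega) (show 0 < kI by omega); omega
    have hd : (0:ℚ) < ((s * kI + a : ℕ) : ℚ) := by exact_mod_cast hd0
    have hkIs : kI ≤ s * kI := Nat.le_mul_of_pos_left kI (by omega)
    have hceil : ⌈(s : ℚ) * t' * kI / ((s * kI + a : ℕ) : ℚ)⌉ = (t' : ℤ) := by
      rw [Int.ceil_eq_iff]
      constructor
      · rw [lt_div_iff₀ hd]
        push_cast
        have hq3 : (a:ℚ) * t' + 1 ≤ kI := by exact_mod_cast h3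
        have hq4 : (kI:ℚ) ≤ s * kI := by exact_mod_cast hkIs
        have hq5 : (0:ℚ) ≤ a := by positivity
        nlinarith [hq3, hq4, hq5]
      · rw [div_le_iff₀ hd]
        push_cast
        have hq6 : (0:ℚ) ≤ (t':ℚ) * a := by positivity
        nlinarith [hq6]
    rw [hceil]
    push_cast
    ring
end

section
/- Let δ ≥ 2, a ≥ 1, t' ≥ 1, and let β_{i,j} (i ∈ [t'], j ∈ [a]) and γ_1,…,γ_{δ-1} be distinct elements of F_q. Form the t'(a+δ-1) × t'(a+δ-1) matrix M with block-diagonal blocks P_i = V_{δ-1}(β_{i,1},…,β_{i,a},γ_1,…,γ_{δ-1}) for i ∈ [t'], and bottom block row (Q_1|…|Q_{t'}) where Q_i consists of rows δ-1 through at'+δ-2 of the Vandermonde matrix on the same locators (β_{i,·}, γ_·). Then M is invertible; in fact det(M) = ±(det V_{δ-1}(γ_1,…,γ_{δ-1}))^{t'-1} · det V_{at'+δ-1}(β_{1,1},…,β_{t',a},γ_1,…,γ_{δ-1}) up to sign, and both factors are nonzero. -/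
/-!
Let `P` be the identity matrix on the blocks with row `i₀` replaced by all ones. Multiplying
the block rows of `M` by `P` (block row `i₀` becomes the sum of all block rows) turns block row
`i₀` into full evaluation rows over all columns. Multiplying every family of `γ`-columns by `P⁻¹`
then leaves the shared `γ`-part `1 ⊗ V` of the block rows unchanged, since `P P⁻¹ = 1`, while in
the bottom rows only the copy of the `γ`-columns in block `i₀` survives, since `1ᵀ P⁻¹ = e_{i₀}ᵀ`
(row `i₀` of `P` is all ones). Both operations have determinant `1`, and the result is block
triangular: one diagonal block is `1 ⊗ V` on the blocks `i ≠ i₀` and their `γ`-columns, of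
determinant `(det V)^(t'-1)`, the other is the Vandermonde matrix on all the distinct locators.

Only evaluation at the locators matters, so the rows `x ↦ x^r` and `x ↦ x^(δ-1+w)` may be
replaced by arbitrary functions `f r`, `g w`; the powers are needed only to see that both factors
are nonzero Vandermonde determinants.
-/

open Matrix
open scoped Kronecker

theorem Matrix.det_one_updateRow {R n : Type*} [CommRing R] [Fintype n] [DecidableEq n]
    (i₀ : n) (v : n → R) : ((1 : Matrix n n R).updateRow i₀ v).det = v i₀ := by
  rw [← det_transpose, ← updateCol_transpose, transpose_one, ← cramer_apply, cramer_one]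
  rfl

theorem Matrix.exists_sign_det_submatrix {R m n : Type*} [CommRing R] [Fintype m] [DecidableEq m]
    [Fintype n] [DecidableEq n] (A : Matrix n n R) (e₁ e₂ : m ≃ n) :
    ∃ ε : R, (ε = 1 ∨ ε = -1) ∧ (A.submatrix e₁ e₂).det = ε * A.det := by
  have hA : A.submatrix e₁ e₂ = (A.submatrix e₂ e₂).submatrix (e₁.trans e₂.symm) id := by
    ext i j
    simp
  refine ⟨_, ?_, by rw [hA, det_permute, det_submatrix_equiv_self]⟩
  rcases Int.units_eq_one_or (Equiv.Perm.sign (e₁.trans e₂.symm)) with h | h <;> simp [h]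

theorem Matrix.bijective_mulVecLin_of_det_submatrix_ne_zero {m n K : Type*} [Fintype m]
    [DecidableEq m] [Fintype n] [Field K] {M : Matrix m n K} (e : m ≃ n)
    (h : (M.submatrix id e).det ≠ 0) : Function.Bijective M.mulVecLin := by
  have hN : IsUnit (M.submatrix id e) := (isUnit_iff_isUnit_det _).mpr h.isUnit
  have hM : ⇑M.mulVecLin = (M.submatrix id e).mulVec ∘ e.symm.arrowCongr (Equiv.refl K) := by
    ext v : 1
    change M *ᵥ v = M.submatrix id e *ᵥ (v ∘ e)
    simp [submatrix_mulVec_equiv, Function.comp_assoc]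
  rw [hM]
  exact Function.Bijective.comp
    ⟨mulVec_injective_iff_isUnit.mpr hN, mulVec_surjective_iff_isUnit.mpr hN⟩ (Equiv.bijective _)

namespace BlockVandermonde

def evalMatrix {R L m n : Type*} (φ : m → L → R) (x : n → L) : Matrix m n R :=
  of fun i j => φ i (x j)

theorem det_evalMatrix_pow_ne_zero {K : Type*} [Field K] {n : ℕ} {v : Fin n → K}
    (hv : Function.Injective v) :
    (evalMatrix (fun (i : Fin n) (x : K) => x ^ (i : ℕ)) v).det ≠ 0 := by
  have hV : evalMatrix (fun (i : Fin n) (x : K) => x ^ (i : ℕ)) v = (vandermonde v)ᵀ := by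
    ext
    simp [evalMatrix, vandermonde]
  rwa [hV, det_transpose, det_vandermonde_ne_zero_iff]

theorem sumElim_pow_finSumFinEquiv_symm {K : Type*} [Monoid K] {m n : ℕ} (i : Fin (m + n))
    (x : K) :
    Sum.elim (fun (r : Fin m) (y : K) => y ^ (r : ℕ)) (fun (w : Fin n) (y : K) => y ^ (m + (w : ℕ)))
      (finSumFinEquiv.symm i) x = x ^ (i : ℕ) := by
  induction i using Fin.addCases <;> simp

variable {R L ι α κ ω : Type*} [CommRing R]
  [Fintype ι] [DecidableEq ι] [Fintype α] [DecidableEq α] [Fintype κ] [DecidableEq κ]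
  [Fintype ω] [DecidableEq ω]

def locator (β : ι → α → L) (γ : κ → L) (c : ι × (α ⊕ κ)) : L := Sum.elim (β c.1) γ c.2

/-- The rows `(i, r)` form the block-diagonal part `P_i`, the rows `w` the bottom block row
`(Q_1|…|Q_{t'})`. -/
def blockMatrix (f : κ → L → R) (g : ω → L → R) (β : ι → α → L) (γ : κ → L) :
    Matrix ((ι × κ) ⊕ ω) (ι × (α ⊕ κ)) R :=
  of fun x c => Sum.elim (fun p => if p.1 = c.1 then f p.2 (locator β γ c) else 0)
    (fun w => g w (locator β γ c)) x

def mergedMatrix (f : κ → L → R) (g : ω → L → R) (β : ι → α → L) (γ : κ → L) :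
    Matrix (κ ⊕ ω) ((ι × α) ⊕ κ) R :=
  evalMatrix (Sum.elim f g) (Sum.elim (fun p => β p.1 p.2) γ)

variable (R) in
def sumIntoRow (i₀ : ι) : Matrix ι ι R := (1 : Matrix ι ι R).updateRow i₀ 1

omit [Fintype ι] in
theorem sumIntoRow_apply (i₀ i i' : ι) :
    sumIntoRow R i₀ i i' = if i = i₀ ∨ i = i' then 1 else 0 := by
  by_cases h : i = i₀ <;> simp [sumIntoRow, updateRow_apply, one_apply, h]

theorem det_sumIntoRow (i₀ : ι) : (sumIntoRow R i₀).det = 1 := det_one_updateRow i₀ 1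

theorem one_vecMul_sumIntoRow_inv (i₀ : ι) :
    (1 : ι → R) ᵥ* (sumIntoRow R i₀)⁻¹ = Pi.single i₀ 1 := by
  have h : Pi.single i₀ 1 ᵥ* sumIntoRow R i₀ = 1 := by
    ext
    simp [single_vecMul, sumIntoRow]
  rw [← h, vecMul_vecMul, mul_nonsing_inv _ (by simp [det_sumIntoRow]), vecMul_one]

variable (κ ω) in
def rowOp (P : Matrix ι ι R) : Matrix ((ι × κ) ⊕ ω) ((ι × κ) ⊕ ω) R :=
  fromBlocks (blockDiagonal fun _ => P) 0 0 1

variable (α κ) in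
noncomputable def colOp (P : Matrix ι ι R) : Matrix (ι × (α ⊕ κ)) (ι × (α ⊕ κ)) R :=
  blockDiagonal (Sum.elim (fun _ => 1) fun _ => P⁻¹)

theorem det_rowOp (P : Matrix ι ι R) : (rowOp κ ω P).det = P.det ^ Fintype.card κ := by
  simp [rowOp, det_blockDiagonal]

theorem det_colOp (P : Matrix ι ι R) : (colOp α κ P).det = P⁻¹.det ^ Fintype.card κ := by
  simp [colOp, det_blockDiagonal, Fintype.prod_sum_type]

section

variable {m : Type*} (P : Matrix ι ι R)

omit [DecidableEq ι] in
theorem rowOp_mul_apply_inl (N : Matrix ((ι × κ) ⊕ ω) m R) (i : ι) (r : κ) (c : m) :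
    (rowOp κ ω P * N) (.inl (i, r)) c = ∑ i', P i i' * N (.inl (i', r)) c := by
  simp [rowOp, mul_apply, Fintype.sum_sum_type, Fintype.sum_prod_type, blockDiagonal_apply]

omit [DecidableEq ι] in
theorem rowOp_mul_apply_inr (N : Matrix ((ι × κ) ⊕ ω) m R) (w : ω) (c : m) :
    (rowOp κ ω P * N) (.inr w) c = N (.inr w) c := by
  simp [rowOp, mul_apply, Fintype.sum_sum_type, one_apply]

theorem mul_colOp_apply_inl (N : Matrix m (ι × (α ⊕ κ)) R) (x : m) (i : ι) (j : α) :
    (N * colOp α κ P) x (i, .inl j) = N x (i, .inl j) := by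
  simp [colOp, mul_apply, Fintype.sum_prod_type, blockDiagonal_apply, one_apply]

theorem mul_colOp_apply_inr (N : Matrix m (ι × (α ⊕ κ)) R) (x : m) (i : ι) (ℓ : κ) :
    (N * colOp α κ P) x (i, .inr ℓ) = ∑ i', N x (i', .inr ℓ) * P⁻¹ i' i := by
  simp [colOp, mul_apply, Fintype.sum_prod_type, blockDiagonal_apply]

end

variable (f : κ → L → R) (g : ω → L → R) (β : ι → α → L) (γ : κ → L) (i₀ : ι)

noncomputable def reducedMatrix : Matrix ((ι × κ) ⊕ ω) (ι × (α ⊕ κ)) R :=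
  rowOp κ ω (sumIntoRow R i₀) * blockMatrix f g β γ * colOp α κ (sumIntoRow R i₀)

theorem det_reducedMatrix_submatrix {S : Type*} [Fintype S] [DecidableEq S]
    (eR : S ≃ (ι × κ) ⊕ ω) (eC : S ≃ ι × (α ⊕ κ)) :
    ((reducedMatrix f g β γ i₀).submatrix eR eC).det =
      ((blockMatrix f g β γ).submatrix eR eC).det := by
  rw [reducedMatrix, ← submatrix_mul_equiv _ _ _ eC, ← submatrix_mul_equiv _ _ _ eR, det_mul,
    det_mul, det_submatrix_equiv_self, det_submatrix_equiv_self, det_rowOp, det_colOp,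
    det_nonsing_inv, det_sumIntoRow, Ring.inverse_one, one_pow, one_mul, mul_one]

theorem reducedMatrix_apply_inl_inl (i : ι) (r : κ) (i' : ι) (j : α) :
    reducedMatrix f g β γ i₀ (.inl (i, r)) (i', .inl j) = sumIntoRow R i₀ i i' * f r (β i' j) := by
  simp [reducedMatrix, mul_colOp_apply_inl, rowOp_mul_apply_inl, blockMatrix, locator]

theorem reducedMatrix_apply_inl_inr (i : ι) (r : κ) (i' : ι) (ℓ : κ) :
    reducedMatrix f g β γ i₀ (.inl (i, r)) (i', .inr ℓ) = if i = i' then f r (γ ℓ) else 0 := by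
  have h : sumIntoRow R i₀ * (sumIntoRow R i₀)⁻¹ = 1 :=
    mul_nonsing_inv _ (by simp [det_sumIntoRow])
  simp only [reducedMatrix, mul_colOp_apply_inr, rowOp_mul_apply_inl, blockMatrix, locator,
    of_apply, Sum.elim_inl, Sum.elim_inr, mul_ite, mul_zero, Finset.sum_ite_eq', Finset.mem_univ,
    if_true]
  simp_rw [mul_right_comm _ (f r (γ ℓ)), ← Finset.sum_mul, ← mul_apply, h, one_apply, ite_mul,
    one_mul, zero_mul]

theorem reducedMatrix_apply_inr_inl (w : ω) (i' : ι) (j : α) :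
    reducedMatrix f g β γ i₀ (.inr w) (i', .inl j) = g w (β i' j) := by
  simp [reducedMatrix, mul_colOp_apply_inl, rowOp_mul_apply_inr, blockMatrix, locator]

theorem reducedMatrix_apply_inr_inr (w : ω) (i' : ι) (ℓ : κ) :
    reducedMatrix f g β γ i₀ (.inr w) (i', .inr ℓ) = if i' = i₀ then g w (γ ℓ) else 0 := by
  have h := congrFun (one_vecMul_sumIntoRow_inv (R := R) i₀) i'
  simp only [vecMul, dotProduct, Pi.one_apply, one_mul] at h
  simp only [reducedMatrix, mul_colOp_apply_inr, rowOp_mul_apply_inr, blockMatrix, locator,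
    of_apply, Sum.elim_inr]
  rw [← Finset.mul_sum, h, Pi.single_apply, mul_ite, mul_one, mul_zero]

variable (κ) in
def splitAt : κ ⊕ ({i // i ≠ i₀} × κ) ≃ ι × κ :=
  optionProdEquiv.symm.trans ((Equiv.optionSubtypeNe i₀).prodCongr (Equiv.refl κ))

variable (κ ω) in
def rowEquiv : (κ ⊕ ω) ⊕ ({i // i ≠ i₀} × κ) ≃ (ι × κ) ⊕ ω :=
  (Equiv.sumAssoc _ _ _).trans <| ((Equiv.refl κ).sumCongr (Equiv.sumComm _ _)).trans <|
    (Equiv.sumAssoc _ _ _).symm.trans <| (splitAt κ i₀).sumCongr (Equiv.refl ω)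

variable (α κ) in
def colEquiv : ((ι × α) ⊕ κ) ⊕ ({i // i ≠ i₀} × κ) ≃ ι × (α ⊕ κ) :=
  (Equiv.sumAssoc _ _ _).trans <| ((Equiv.refl _).sumCongr (splitAt κ i₀)).trans <|
    (Equiv.prodSumDistrib ι α κ).symm

theorem det_blockMatrix_submatrix_rowEquiv_colEquiv (e' : κ ⊕ ω ≃ (ι × α) ⊕ κ) :
    ((blockMatrix f g β γ).submatrix (rowEquiv κ ω i₀)
      ((e'.sumCongr (Equiv.refl _)).trans (colEquiv α κ i₀))).det =
    ((mergedMatrix f g β γ).submatrix id e').det *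
      (evalMatrix f γ).det ^ (Fintype.card ι - 1) := by
  set eC := (e'.sumCongr (Equiv.refl _)).trans (colEquiv α κ i₀)
  rw [← det_reducedMatrix_submatrix f g β γ i₀]
  set N := (reducedMatrix f g β γ i₀).submatrix (rowEquiv κ ω i₀) eC
  have h₁₂ : N.toBlocks₁₂ = 0 := by
    ext (r | w) ⟨⟨i, hi⟩, ℓ⟩
    · simp [N, eC, toBlocks₁₂, rowEquiv, colEquiv, splitAt, reducedMatrix_apply_inl_inr,
        Ne.symm hi]
    · simp [N, eC, toBlocks₁₂, rowEquiv, colEquiv, splitAt, reducedMatrix_apply_inr_inr, hi]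
  have h₁₁ : N.toBlocks₁₁ = (mergedMatrix f g β γ).submatrix id e' := by
    ext x y
    rcases x with r | w <;> rcases h : e' y with ⟨i, j⟩ | ℓ <;>
      simp [N, eC, toBlocks₁₁, rowEquiv, colEquiv, splitAt, h, mergedMatrix, evalMatrix,
        sumIntoRow_apply, reducedMatrix_apply_inl_inl, reducedMatrix_apply_inl_inr,
        reducedMatrix_apply_inr_inl, reducedMatrix_apply_inr_inr]
  have h₂₂ : N.toBlocks₂₂ = (1 : Matrix {i // i ≠ i₀} {i // i ≠ i₀} R) ⊗ₖ evalMatrix f γ := by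
    ext ⟨⟨i, hi⟩, r⟩ ⟨⟨i', hi'⟩, ℓ⟩
    simp [N, eC, toBlocks₂₂, rowEquiv, colEquiv, splitAt, reducedMatrix_apply_inl_inr,
      evalMatrix, one_apply]
  rw [← fromBlocks_toBlocks N, h₁₂, det_fromBlocks_zero₁₂, h₁₁, h₂₂,
    det_kronecker, det_one, one_pow, one_mul]
  simp [Fintype.card_subtype_compl]

theorem exists_sign_det_blockMatrix [Nonempty ι] (e : (ι × κ) ⊕ ω ≃ ι × (α ⊕ κ))
    (e' : κ ⊕ ω ≃ (ι × α) ⊕ κ) : ∃ ε : R, (ε = 1 ∨ ε = -1) ∧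
      ((blockMatrix f g β γ).submatrix id e).det =
        ε * (evalMatrix f γ).det ^ (Fintype.card ι - 1) *
          ((mergedMatrix f g β γ).submatrix id e').det := by
  let i₀ : ι := Classical.arbitrary ι
  set eC := (e'.sumCongr (Equiv.refl _)).trans (colEquiv α κ i₀)
  have h : (blockMatrix f g β γ).submatrix id e =
      ((blockMatrix f g β γ).submatrix (rowEquiv κ ω i₀) eC).submatrix (rowEquiv κ ω i₀).symm
        (e.trans eC.symm) := by
    ext x y
    simp
  obtain ⟨ε, hε, hdet⟩ := exists_sign_det_submatrix
    ((blockMatrix f g β γ).submatrix (rowEquiv κ ω i₀) eC) (rowEquiv κ ω i₀).symm (e.trans eC.symm)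
  exact ⟨ε, hε, by rw [h, hdet, det_blockMatrix_submatrix_rowEquiv_colEquiv]; ring⟩

end BlockVandermonde

open BlockVandermonde in
theorem stmt13_general {F : Type*} [Field F]
    (a t' δ : ℕ) (ht : 1 ≤ t')
    (β : Fin t' → Fin a → F) (γ : Fin (δ - 1) → F)
    (hdist : Function.Injective
      (Sum.elim (fun p : Fin t' × Fin a => β p.1 p.2) γ)) :
    let loc : Fin t' × (Fin a ⊕ Fin (δ - 1)) → F := fun c =>
      Sum.elim (fun j => β c.1 j) γ c.2
    let M : Matrix ((Fin t' × Fin (δ - 1)) ⊕ Fin (a * t'))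
        (Fin t' × (Fin a ⊕ Fin (δ - 1))) F := fun ri ci =>
      Sum.elim
        (fun p => if p.1 = ci.1 then loc ci ^ (p.2 : ℕ) else 0)
        (fun w => loc ci ^ (δ - 1 + (w : ℕ)))
        ri
    let Vγ : Matrix (Fin (δ - 1)) (Fin (δ - 1)) F := fun i j => γ j ^ (i : ℕ)
    let bigcols : (Fin t' × Fin a) ⊕ Fin (δ - 1) ≃ Fin (t' * a + (δ - 1)) :=
      (Equiv.sumCongr finProdFinEquiv (Equiv.refl _)).trans finSumFinEquiv
    let bigV : Matrix (Fin (t' * a + (δ - 1))) (Fin (t' * a + (δ - 1))) F :=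
      fun i j =>
        Sum.elim (fun p : Fin t' × Fin a => β p.1 p.2) γ (bigcols.symm j) ^ (i : ℕ)
    Function.Bijective M.mulVecLin ∧
    Vγ.det ≠ 0 ∧ bigV.det ≠ 0 ∧
    ∀ e : ((Fin t' × Fin (δ - 1)) ⊕ Fin (a * t')) ≃ (Fin t' × (Fin a ⊕ Fin (δ - 1))),
      ∃ ε : F, (ε = 1 ∨ ε = -1) ∧
        (M.submatrix id e).det = ε * Vγ.det ^ (t' - 1) * bigV.det := by
  intro loc M Vγ bigcols bigV
  have : Nonempty (Fin t') := ⟨⟨0, ht⟩⟩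
  set f : Fin (δ - 1) → F → F := fun r x => x ^ (r : ℕ)
  set g : Fin (a * t') → F → F := fun w x => x ^ (δ - 1 + (w : ℕ))
  have hM : M = blockMatrix f g β γ := by
    ext x c
    rcases x with p | w <;> rfl
  let rows : Fin (t' * a + (δ - 1)) ≃ Fin (δ - 1) ⊕ Fin (a * t') :=
    (finCongr (by ring)).trans finSumFinEquiv.symm
  let e' := rows.symm.trans bigcols.symm
  have hVγ : Vγ = evalMatrix f γ := rfl
  have hbigV : bigV.det = ((mergedMatrix f g β γ).submatrix id e').det := by
    rw [← det_submatrix_equiv_self rows]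
    congr 1
    ext i j
    simp [mergedMatrix, evalMatrix, e', rows, bigV, f, g, sumElim_pow_finSumFinEquiv_symm]
  have hVγ0 : Vγ.det ≠ 0 := det_evalMatrix_pow_ne_zero fun _ _ h => Sum.inr_injective (hdist h)
  have hbigV0 : bigV.det ≠ 0 := det_evalMatrix_pow_ne_zero (hdist.comp bigcols.symm.injective)
  have hdet : ∀ e : ((Fin t' × Fin (δ - 1)) ⊕ Fin (a * t')) ≃ (Fin t' × (Fin a ⊕ Fin (δ - 1))),
      ∃ ε : F, (ε = 1 ∨ ε = -1) ∧ (M.submatrix id e).det = ε * Vγ.det ^ (t' - 1) * bigV.det :=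
    fun e => by
      simpa [hM, hVγ, hbigV] using exists_sign_det_blockMatrix f g β γ e e'
  refine ⟨?_, hVγ0, hbigV0, hdet⟩
  obtain ⟨e⟩ : Nonempty (((Fin t' × Fin (δ - 1)) ⊕ Fin (a * t')) ≃
      (Fin t' × (Fin a ⊕ Fin (δ - 1)))) := Fintype.card_eq.mp (by simp; ring)
  obtain ⟨ε, hε, h⟩ := hdet e
  refine bijective_mulVecLin_of_det_submatrix_ne_zero e ?_
  rw [h]
  rcases hε with rfl | rfl <;> simp [hVγ0, hbigV0]

/-- The written-symbols matrix `H^F|_W` of Section VI: block-diagonal Vandermonde blocks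
`P_i = V_{δ-1}(β_{i,1},…,β_{i,a},γ_1,…,γ_{δ-1})` together with the bottom block row
`(Q_1|…|Q_{t'})` of rows `δ-1,…,at'+δ-2` of the Vandermonde matrices on the same locators.
This square matrix of size `t'(a+δ-1)` is invertible; in fact up to sign its determinant is
`(det V_{δ-1}(γ))^{t'-1} · det V_{at'+δ-1}(β_{1,1},…,β_{t',a},γ_1,…,γ_{δ-1})`,
and both factors are nonzero. -/
theorem stmt13 {F : Type*} [Field F] [DecidableEq F]
    (a t' δ : ℕ) (ha : 1 ≤ a) (ht : 1 ≤ t') (hδ : 2 ≤ δ)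
    (β : Fin t' → Fin a → F) (γ : Fin (δ - 1) → F)
    (hdist : Function.Injective
      (Sum.elim (fun p : Fin t' × Fin a => β p.1 p.2) γ)) :
    let loc : Fin t' × (Fin a ⊕ Fin (δ - 1)) → F := fun c =>
      Sum.elim (fun j => β c.1 j) γ c.2
    let M : Matrix ((Fin t' × Fin (δ - 1)) ⊕ Fin (a * t'))
        (Fin t' × (Fin a ⊕ Fin (δ - 1))) F := fun ri ci =>
      Sum.elim
        (fun p => if p.1 = ci.1 then loc ci ^ (p.2 : ℕ) else 0)
        (fun w => loc ci ^ (δ - 1 + (w : ℕ)))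
        ri
    let Vγ : Matrix (Fin (δ - 1)) (Fin (δ - 1)) F := fun i j => γ j ^ (i : ℕ)
    let bigcols : (Fin t' × Fin a) ⊕ Fin (δ - 1) ≃ Fin (t' * a + (δ - 1)) :=
      (Equiv.sumCongr finProdFinEquiv (Equiv.refl _)).trans finSumFinEquiv
    let bigV : Matrix (Fin (t' * a + (δ - 1))) (Fin (t' * a + (δ - 1))) F :=
      fun i j =>
        Sum.elim (fun p : Fin t' × Fin a => β p.1 p.2) γ (bigcols.symm j) ^ (i : ℕ)
    Function.Bijective M.mulVecLin ∧
    Vγ.det ≠ 0 ∧ bigV.det ≠ 0 ∧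
    ∀ e : ((Fin t' × Fin (δ - 1)) ⊕ Fin (a * t')) ≃ (Fin t' × (Fin a ⊕ Fin (δ - 1))),
      ∃ ε : F, (ε = 1 ∨ ε = -1) ∧
        (M.submatrix id e).det = ε * Vγ.det ^ (t' - 1) * bigV.det :=
  stmt13_general a t' δ ht β γ hdist
end

section
/- Let C^{I_1},…,C^{I_t} be linear codes with C^{I_i} of dimension k_{I_i}, let C^F be a linear [n_F, k_F] code with k_F = Σ_i k_{I_i} and minimum distance d_F, and let φ be a linear bijection from the product of the initial codes to C^F that maps coordinates in U_i ⊆ [n_F] identically from C^{I_i}. If d_F > n_{I_1} - k_{I_1} + 1, then the set of read coordinates R_1 of C^{I_1} satisfies |R_1| ≥ k_{I_1}; equivalently, |U_1 \ R_1| ≤ d_F - 1 is impossible to violate without reading all information: assuming |U_1\R_1| > d_F - 1 leads to n_{I_1} - d_F + 1 ≥ k_{I_1}, a contradiction. -/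
section Hamming

variable {ι κ β : Type*} [Fintype ι] [Fintype κ] [Zero β] [DecidableEq β]

theorem hammingNorm_le_card_sub_of_forall_mem_eq_zero [DecidableEq ι] {x : ι → β}
    {T : Finset ι} (hx : ∀ j ∈ T, x j = 0) : hammingNorm x ≤ Fintype.card ι - T.card := by
  rw [← Finset.card_compl]
  refine Finset.card_le_card fun j hj => Finset.mem_compl.mpr fun hjT => ?_
  exact (Finset.mem_filter.mp hj).2 (hx j hjT)

theorem hammingNorm_comp_le_of_injective (x : ι → β) {e : κ → ι} (he : Function.Injective e) :
    hammingNorm (x ∘ e) ≤ hammingNorm x :=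
  Finset.card_le_card_of_injOn e (fun k hk => by simpa [hammingNorm] using hk) he.injOn

theorem hammingNorm_le_hammingNorm_comp (x : ι → β) (e : κ → ι)
    (hx : ∀ j, x j ≠ 0 → j ∈ Set.range e) : hammingNorm x ≤ hammingNorm (x ∘ e) := by
  classical
  calc hammingNorm x ≤ ((Finset.univ.filter fun k => x (e k) ≠ 0).image e).card := by
        refine Finset.card_le_card fun j hj => ?_
        obtain ⟨k, rfl⟩ := hx j (Finset.mem_filter.mp hj).2
        exact Finset.mem_image_of_mem e (by simpa using (Finset.mem_filter.mp hj).2)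
    _ ≤ hammingNorm (x ∘ e) := Finset.card_image_le

end Hamming

namespace Submodule

variable {ι F : Type*} [Fintype ι] [Field F]

theorem exists_ne_zero_forall_mem_eq_zero_of_card_lt (C : Submodule F (ι → F)) {T : Finset ι}
    (hT : T.card < Module.finrank F C) : ∃ c ∈ C, c ≠ 0 ∧ ∀ j ∈ T, c j = 0 := by
  let restrict : C →ₗ[F] (T → F) := LinearMap.funLeft F F ((↑) : T → ι) ∘ₗ C.subtype
  have hker : LinearMap.ker restrict ≠ ⊥ :=
    LinearMap.ker_ne_bot_of_finrank_lt (by simpa using hT)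
  obtain ⟨c, hc, hc0⟩ := (Submodule.ne_bot_iff _).mp hker
  refine ⟨c, c.2, by simpa using hc0, fun j hj => ?_⟩
  simpa [restrict] using congrFun (LinearMap.mem_ker.mp hc) ⟨j, hj⟩

theorem exists_ne_zero_forall_mem_eq_zero_hammingNorm_le [DecidableEq F]
    (C : Submodule F (ι → F)) {S : Finset ι} (hS : S.card < Module.finrank F C) :
    ∃ c ∈ C, c ≠ 0 ∧ (∀ j ∈ S, c j = 0) ∧
      hammingNorm c + Module.finrank F C ≤ Fintype.card ι + 1 := by
  classical
  have hk : Module.finrank F C ≤ Fintype.card ι := by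
    simpa using C.finrank_le
  obtain ⟨T, hST, hT⟩ := Finset.exists_superset_card_eq (n := Module.finrank F C - 1)
    (s := S) (by omega) (by omega)
  obtain ⟨c, hcC, hc0, hcT⟩ := C.exists_ne_zero_forall_mem_eq_zero_of_card_lt (T := T) (by omega)
  have := hammingNorm_le_card_sub_of_forall_mem_eq_zero hcT
  exact ⟨c, hcC, hc0, fun j hj => hcT j (hST hj), by omega⟩

end Submodule

theorem hammingNorm_map_single_le_of_forall_mem_read_eq_zero {F ι τ : Type*} {κ : ι → Type*}
    [Field F] [DecidableEq F] [DecidableEq ι] [∀ i, Fintype (κ i)] [Fintype τ]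
    {CI : ∀ i, Submodule F (κ i → F)} {CF : Submodule F (τ → F)}
    (φ : (∀ i, CI i) →ₗ[F] CF) {U : ι → Finset τ} {Wr : Finset τ} {R : ∀ i, Finset (κ i)}
    {m : ∀ i, U i → κ i}
    (hU : ∀ i, ∀ v : ∀ i, CI i, ∀ j : ↥(U i), (φ v).1 j.1 = (v i).1 (m i j))
    (hW : ∀ v v' : ∀ i, CI i,
      (∀ i, ∀ j ∈ R i, (v i).1 j = (v' i).1 j) → ∀ j ∈ Wr, (φ v).1 j = (φ v').1 j)
    (hpart : ∀ j : τ, j ∈ Wr ∨ ∃ i, j ∈ U i)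
    {i : ι} (hm : Function.Injective (m i)) {c : CI i} (hc : ∀ j ∈ R i, c.1 j = 0) :
    hammingNorm (φ (Pi.single i c) : τ → F) ≤ hammingNorm (c : κ i → F) := by
  set v : ∀ i, CI i := Pi.single i c
  have hv_ne : ∀ l, l ≠ i → v l = 0 := fun l hl => Pi.single_eq_of_ne hl (M := fun i => CI i) c
  have hread : ∀ l, ∀ j ∈ R l, (v l).1 j = ((0 : ∀ i, CI i) l).1 j := by
    intro l j hj
    rcases eq_or_ne l i with rfl | hl
    · simpa [v] using hc j hj
    · simp [hv_ne l hl]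
  have hsupp : ∀ j, (φ v).1 j ≠ 0 → j ∈ Set.range ((↑) : U i → τ) := by
    intro j hj
    rcases hpart j with hjW | ⟨l, hjl⟩
    · simp [hW v 0 hread j hjW] at hj
    · rcases eq_or_ne l i with rfl | hl
      · exact ⟨⟨j, hjl⟩, rfl⟩
      · simp [hU l v ⟨j, hjl⟩, hv_ne l hl] at hj
  have hcomp : (φ v : τ → F) ∘ ((↑) : U i → τ) = (c : κ i → F) ∘ m i := by
    funext j
    simpa [v] using hU i v j
  calc hammingNorm (φ v : τ → F) ≤ hammingNorm ((φ v : τ → F) ∘ ((↑) : U i → τ)) :=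
        hammingNorm_le_hammingNorm_comp _ _ hsupp
    _ = hammingNorm ((c : κ i → F) ∘ m i) := by rw [hcomp]
    _ ≤ hammingNorm (c : κ i → F) := hammingNorm_comp_le_of_injective _ hm

/-- Index `0` plays the role of `I_1`; `m i` identifies the unchanged coordinates `U i` of the final
code with coordinates of the `i`-th initial code. -/
theorem stmt19_general {F : Type*} [Field F] [DecidableEq F]
    {t : ℕ} [NeZero t]
    (nI kI : Fin t → ℕ) {nF dF : ℕ}
    (CI : ∀ i : Fin t, Submodule F (Fin (nI i) → F))
    (CF : Submodule F (Fin nF → F))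
    (hCI : ∀ i, Module.finrank F (CI i) = kI i)
    (hd : IsMinDist CF dF)
    (φ : (∀ i, CI i) ≃ₗ[F] CF)
    (U : Fin t → Finset (Fin nF)) (Wr : Finset (Fin nF))
    (R : ∀ i, Finset (Fin (nI i)))
    (m : ∀ i, ↥(U i) → Fin (nI i))
    (hm : ∀ i, Function.Injective (m i))
    (hU : ∀ i, ∀ v : ∀ i, CI i, ∀ j : ↥(U i), (φ v).1 j.1 = (v i).1 (m i j))
    (hW : ∀ v v' : ∀ i, CI i,
      (∀ i, ∀ j ∈ R i, (v i).1 j = (v' i).1 j) → ∀ j ∈ Wr, (φ v).1 j = (φ v').1 j)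
    (hpart : ∀ j : Fin nF, j ∈ Wr ∨ ∃ i, j ∈ U i)
    (hdF : (nI 0 : ℤ) - kI 0 + 1 < dF) :
    kI 0 ≤ (R 0).card := by
  by_contra! hR
  obtain ⟨c, hcC, hc0, hcR, hc_wt⟩ :=
    (CI 0).exists_ne_zero_forall_mem_eq_zero_hammingNorm_le (S := R 0) (by rwa [hCI])
  have hφ_ne : (φ (Pi.single 0 ⟨c, hcC⟩) : Fin nF → F) ≠ 0 := by
    simpa [Pi.single_eq_zero_iff] using hc0
  have h_lower := hd.1 _ (φ _).2 hφ_ne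
  have h_upper := hammingNorm_map_single_le_of_forall_mem_read_eq_zero φ.toLinearMap hU hW hpart
    (hm 0) (c := ⟨c, hcC⟩) hcR
  rw [hCI, Fintype.card_fin] at hc_wt
  simp only [LinearEquiv.coe_coe] at h_upper
  omega

/-- In a `(t,1)` merge-convertible code (linear bijection `φ` from the product of the initial
codes to the final code, with unchanged coordinates `U_i` equal to the corresponding initial
coordinates `m_i`, written coordinates `Wr` determined by the read coordinates `R_i`, and
every final coordinate either written or unchanged):
if `d_F > n_{I_1} - k_{I_1} + 1`, then `|R_1| ≥ k_{I_1}`. -/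
theorem stmt19 {F : Type*} [Field F] [Fintype F] [DecidableEq F]
    {t : ℕ} (ht : 2 ≤ t) [NeZero t]
    (nI kI : Fin t → ℕ) {nF kF dF : ℕ}
    (CI : ∀ i : Fin t, Submodule F (Fin (nI i) → F))
    (CF : Submodule F (Fin nF → F))
    (hCI : ∀ i, Module.finrank F (CI i) = kI i)
    (hCF : Module.finrank F CF = kF)
    (hsum : kF = ∑ i, kI i)
    (hd : IsMinDist CF dF)
    (φ : (∀ i, CI i) ≃ₗ[F] CF)
    (U : Fin t → Finset (Fin nF)) (Wr : Finset (Fin nF))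
    (R : ∀ i, Finset (Fin (nI i)))
    (m : ∀ i, ↥(U i) → Fin (nI i))
    (hm : ∀ i, Function.Injective (m i))
    (hU : ∀ i, ∀ v : ∀ i, CI i, ∀ j : ↥(U i), (φ v).1 j.1 = (v i).1 (m i j))
    (hW : ∀ v v' : ∀ i, CI i,
      (∀ i, ∀ j ∈ R i, (v i).1 j = (v' i).1 j) → ∀ j ∈ Wr, (φ v).1 j = (φ v').1 j)
    (hpart : ∀ j : Fin nF, j ∈ Wr ∨ ∃ i, j ∈ U i)
    (hdF : (nI 0 : ℤ) - kI 0 + 1 < dF) :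
    kI 0 ≤ (R 0).card :=
  stmt19_general nI kI CI CF hCI hd φ U Wr R m hm hU hW hpart hdF
end
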